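/- arXiv:1603.03190 — 3 statements merged into one kernel-verified Lean document; each statement's English description precedes it below -/
import Mathlib

section
/- Let f be smooth strictly convex on Ω ⊂ ℝⁿ with Legendre transform u on Ω*. For any smooth function φ on Ω* (viewed also as a function of x via ξ = ∇f(x)), one has Σ u^{ij} ∂²φ/∂ξ_i∂ξ_j = Σ f^{ij} ∂²φ/∂x^i∂x^j − Σ f^{ij} ∂(log det(f_{kl}))/∂x^i · ∂φ/∂x^j at corresponding points. -/
open scoped BigOperators
open Equiv Finset

/-- The `i`-th partial derivative of `f`. -/
noncomputable def pdv {n : ℕ} (i : Fin n) (f : (Fin n → ℝ) → ℝ) : (Fin n → ℝ) → ℝ :=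
  fun x => fderiv ℝ f x (Pi.single i 1)

/-- The gradient (normal map) of `f`. -/
noncomputable def gradv {n : ℕ} (f : (Fin n → ℝ) → ℝ) (x : Fin n → ℝ) : Fin n → ℝ :=
  fun i => pdv i f x

/-- The Hessian matrix of `f` at `x`. -/
noncomputable def hessM {n : ℕ} (f : (Fin n → ℝ) → ℝ) (x : Fin n → ℝ) :
    Matrix (Fin n) (Fin n) ℝ :=
  Matrix.of fun i j => pdv i (pdv j f) x

section Helpers

theorem clm_apply_eq_sum {n : ℕ} (L : (Fin n → ℝ) →L[ℝ] ℝ) (v : Fin n → ℝ) :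
    L v = ∑ i, v i * L (Pi.single i 1) := by
  conv_lhs => rw [← Finset.univ_sum_single v]
  rw [map_sum]
  congr 1; ext i
  have : (Pi.single i (v i) : Fin n → ℝ) = v i • (Pi.single i 1 : Fin n → ℝ) := by
    rw [← Pi.single_smul, smul_eq_mul, mul_one]
  rw [this, map_smul, smul_eq_mul]

theorem pdv_hasFDerivAt {n : ℕ} {f : (Fin n → ℝ) → ℝ} {L : (Fin n → ℝ) →L[ℝ] ℝ}
    {x : Fin n → ℝ} (h : HasFDerivAt f L x) (i : Fin n) :
    pdv i f x = L (Pi.single i 1) := by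
  simp [pdv, h.fderiv]

theorem pdv_contDiffOn {n : ℕ} {s : Set (Fin n → ℝ)} (hs : IsOpen s)
    {g : (Fin n → ℝ) → ℝ} (hg : ContDiffOn ℝ (⊤ : ℕ∞) g s) (i : Fin n) :
    ContDiffOn ℝ (⊤ : ℕ∞) (pdv i g) s := by
  have h1 : ContDiffOn ℝ (⊤ : ℕ∞) (fun x => fderiv ℝ g x) s := hg.fderiv_of_isOpen hs (by simp)
  exact (ContinuousLinearMap.apply ℝ ℝ (Pi.single i 1)).contDiff.comp_contDiffOn h1

theorem diffAt_of {n : ℕ} {s : Set (Fin n → ℝ)} (hs : IsOpen s)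
    {g : (Fin n → ℝ) → ℝ} (hg : ContDiffOn ℝ (⊤ : ℕ∞) g s) {y : Fin n → ℝ} (hy : y ∈ s) :
    DifferentiableAt ℝ g y :=
  (hg.contDiffAt (hs.mem_nhds hy)).differentiableAt (by simp)

theorem pdv_comp {n : ℕ} {g : (Fin n → ℝ) → (Fin n → ℝ)} {χ : (Fin n → ℝ) → ℝ}
    {x : Fin n → ℝ} (hg : ∀ k, DifferentiableAt ℝ (fun y => g y k) x)
    (hχ : DifferentiableAt ℝ χ (g x)) (i : Fin n) :
    pdv i (fun y => χ (g y)) x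
      = ∑ k, pdv i (fun y => g y k) x * pdv k χ (g x) := by
  have hgd : HasFDerivAt g (ContinuousLinearMap.pi fun k => fderiv ℝ (fun y => g y k) x) x := by
    rw [hasFDerivAt_pi']
    intro k
    exact ((hg k).hasFDerivAt).congr_fderiv rfl
  have hc : HasFDerivAt (fun y => χ (g y))
      ((fderiv ℝ χ (g x)).comp (ContinuousLinearMap.pi fun k => fderiv ℝ (fun y => g y k) x)) x :=
    (hχ.hasFDerivAt).comp x hgd
  rw [pdv_hasFDerivAt hc i]
  simp only [ContinuousLinearMap.coe_comp', Function.comp_apply]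
  rw [clm_apply_eq_sum (fderiv ℝ χ (g x))]
  rfl

theorem pdv_congr_nhds {n : ℕ} {f₁ f₂ : (Fin n → ℝ) → ℝ} {x : Fin n → ℝ}
    (h : f₁ =ᶠ[nhds x] f₂) (i : Fin n) : pdv i f₁ x = pdv i f₂ x := by
  simp [pdv, h.fderiv_eq]

theorem pdv_mul {n : ℕ} {a b : (Fin n → ℝ) → ℝ} {x : Fin n → ℝ}
    (ha : DifferentiableAt ℝ a x) (hb : DifferentiableAt ℝ b x) (i : Fin n) :
    pdv i (fun y => a y * b y) x = pdv i a x * b x + a x * pdv i b x := by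
  simp only [pdv]
  rw [fderiv_fun_mul ha hb]
  simp [mul_comm]
  ring

theorem pdv_sub {n : ℕ} {a b : (Fin n → ℝ) → ℝ} {x : Fin n → ℝ}
    (ha : DifferentiableAt ℝ a x) (hb : DifferentiableAt ℝ b x) (i : Fin n) :
    pdv i (fun y => a y - b y) x = pdv i a x - pdv i b x := by
  simp [pdv, fderiv_fun_sub ha hb]

theorem pdv_const_mul {n : ℕ} {h : (Fin n → ℝ) → ℝ} {x : Fin n → ℝ} (c : ℝ)
    (hh : DifferentiableAt ℝ h x) (i : Fin n) :
    pdv i (fun y => c * h y) x = c * pdv i h x := by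
  simp [pdv, fderiv_const_mul hh c]

theorem pdv_sum {n : ℕ} {ι : Type*} (s : Finset ι) {F : ι → (Fin n → ℝ) → ℝ} {x : Fin n → ℝ}
    (h : ∀ k ∈ s, DifferentiableAt ℝ (F k) x) (i : Fin n) :
    pdv i (fun y => ∑ k ∈ s, F k y) x = ∑ k ∈ s, pdv i (F k) x := by
  simp only [pdv]
  rw [fderiv_fun_sum h]
  simp

theorem pdv_proj {n : ℕ} (k : Fin n) (x : Fin n → ℝ) (i : Fin n) :
    pdv i (fun y => y k) x = if i = k then 1 else 0 := by
  have : (fun y : Fin n → ℝ => y k) = (ContinuousLinearMap.proj k : (Fin n → ℝ) →L[ℝ] ℝ) := rfl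
  rw [pdv, this, ContinuousLinearMap.fderiv]
  simp [Pi.single_apply, eq_comm]

theorem pdv_prod {n : ℕ} {ι : Type*} [DecidableEq ι] (u : Finset ι)
    {F : ι → (Fin n → ℝ) → ℝ} {x : Fin n → ℝ}
    (h : ∀ j ∈ u, DifferentiableAt ℝ (F j) x) (i : Fin n) :
    pdv i (fun y => ∏ j ∈ u, F j y) x
      = ∑ j ∈ u, (∏ k ∈ u.erase j, F k x) * pdv i (F j) x := by
  have hd : HasFDerivAt (fun y => ∏ j ∈ u, F j y)
      (∑ j ∈ u, (∏ k ∈ u.erase j, F k x) • fderiv ℝ (F j) x) x :=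
    HasFDerivAt.finset_prod (fun j hj => (h j hj).hasFDerivAt)
  rw [pdv_hasFDerivAt hd i]
  simp [pdv]

theorem pdv_comm {n : ℕ} {s : Set (Fin n → ℝ)} (hs : IsOpen s)
    {w : (Fin n → ℝ) → ℝ} (hw : ContDiffOn ℝ (⊤ : ℕ∞) w s) {y : Fin n → ℝ} (hy : y ∈ s)
    (a b : Fin n) : pdv a (pdv b w) y = pdv b (pdv a w) y := by
  have hev : ∀ᶠ z in nhds y, HasFDerivAt w (fderiv ℝ w z) z := by
    filter_upwards [hs.mem_nhds hy] with z hz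
    exact ((hw.contDiffAt (hs.mem_nhds hz)).differentiableAt (by simp)).hasFDerivAt
  have hfd : ContDiffOn ℝ (⊤ : ℕ∞) (fun z => fderiv ℝ w z) s := hw.fderiv_of_isOpen hs (by simp)
  have hd2 : DifferentiableAt ℝ (fderiv ℝ w) y :=
    (hfd.contDiffAt (hs.mem_nhds hy)).differentiableAt (by simp)
  have key : ∀ c d : Fin n, pdv c (pdv d w) y
      = fderiv ℝ (fderiv ℝ w) y (Pi.single c 1) (Pi.single d 1) := by
    intro c d
    have e1 : pdv d w = fun z =>
        (ContinuousLinearMap.apply ℝ ℝ (Pi.single d 1) : ((Fin n → ℝ) →L[ℝ] ℝ) →L[ℝ] ℝ)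
          (fderiv ℝ w z) := rfl
    have h3 : HasFDerivAt (fun z =>
        (ContinuousLinearMap.apply ℝ ℝ (Pi.single d 1) : ((Fin n → ℝ) →L[ℝ] ℝ) →L[ℝ] ℝ)
          (fderiv ℝ w z))
        ((ContinuousLinearMap.apply ℝ ℝ (Pi.single d 1) :
          ((Fin n → ℝ) →L[ℝ] ℝ) →L[ℝ] ℝ).comp (fderiv ℝ (fderiv ℝ w) y)) y :=
      by exact (ContinuousLinearMap.apply ℝ ℝ (Pi.single d 1)).hasFDerivAt.comp y hd2.hasFDerivAt
    rw [pdv, e1, h3.fderiv]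
    rfl
  rw [key a b, key b a]
  exact second_derivative_symmetric_of_eventually hev hd2.hasFDerivAt _ _

theorem pdv3_comm {n : ℕ} {s : Set (Fin n → ℝ)} (hs : IsOpen s)
    {f : (Fin n → ℝ) → ℝ} (hf : ContDiffOn ℝ (⊤ : ℕ∞) f s) {x : Fin n → ℝ} (hx : x ∈ s)
    (q p k : Fin n) :
    pdv q (pdv p (pdv k f)) x = pdv k (pdv p (pdv q f)) x := by
  have e1 : ∀ a b : Fin n, (pdv a (pdv b f)) =ᶠ[nhds x] (pdv b (pdv a f)) := by
    intro a b
    exact Filter.eventuallyEq_of_mem (hs.mem_nhds hx) (fun z hz => pdv_comm hs hf hz a b)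
  calc pdv q (pdv p (pdv k f)) x
      = pdv q (pdv k (pdv p f)) x := pdv_congr_nhds (e1 p k) q
    _ = pdv k (pdv q (pdv p f)) x := pdv_comm hs (pdv_contDiffOn hs hf p) hx q k
    _ = pdv k (pdv p (pdv q f)) x := pdv_congr_nhds (e1 q p) k

theorem adjugate_eq_sum_perm {n : ℕ} (A : Matrix (Fin n) (Fin n) ℝ) (j k : Fin n) :
    A.adjugate j k
      = ∑ σ ∈ Finset.univ.filter (fun σ : Perm (Fin n) => σ j = k),
          ((Perm.sign σ : ℤ) : ℝ) * ∏ m ∈ Finset.univ.erase j, A (σ m) m := by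
  rw [Matrix.adjugate_apply, Matrix.det_apply']
  rw [← Finset.sum_filter_add_sum_filter_not Finset.univ (fun σ : Perm (Fin n) => σ j = k)]
  have h2 : ∑ σ ∈ Finset.univ.filter (fun σ : Perm (Fin n) => ¬σ j = k),
      ((Perm.sign σ : ℤ) : ℝ) * ∏ m, (A.updateRow k (Pi.single j 1)) (σ m) m = 0 := by
    apply Finset.sum_eq_zero
    intro σ hσ
    rw [Finset.mem_filter] at hσ
    have hm0 : (A.updateRow k (Pi.single j 1)) (σ (σ⁻¹ k)) (σ⁻¹ k) = 0 := by
      rw [show σ (σ⁻¹ k) = k from σ.apply_symm_apply k, Matrix.updateRow_self]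
      have : σ⁻¹ k ≠ j := by
        intro h; apply hσ.2; rw [← h]; exact σ.apply_symm_apply k
      simpa [Pi.single_apply] using this
    have := Finset.prod_eq_zero (f := fun m => A.updateRow k (Pi.single j 1) (σ m) m)
      (Finset.mem_univ (σ⁻¹ k)) hm0
    rw [this, mul_zero]
  rw [h2, add_zero]
  apply Finset.sum_congr rfl
  intro σ hσ
  rw [Finset.mem_filter] at hσ
  congr 1
  rw [← Finset.mul_prod_erase Finset.univ _ (Finset.mem_univ j)]
  have h1 : (A.updateRow k (Pi.single j 1)) (σ j) j = 1 := by
    rw [hσ.2, Matrix.updateRow_self]; simp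
  rw [h1, one_mul]
  apply Finset.prod_congr rfl
  intro m hm
  rw [Finset.mem_erase] at hm
  have : σ m ≠ k := by
    intro h; exact hm.1 (σ.injective (h.trans hσ.2.symm))
  rw [Matrix.updateRow_apply, if_neg this]

theorem det_diffAt {n : ℕ} {M : (Fin n → ℝ) → Matrix (Fin n) (Fin n) ℝ} {x : Fin n → ℝ}
    (h : ∀ k l, DifferentiableAt ℝ (fun y => M y k l) x) :
    DifferentiableAt ℝ (fun y => (M y).det) x := by
  have e : (fun y => (M y).det)
      = fun y => ∑ σ : Perm (Fin n), ((Perm.sign σ : ℤ) : ℝ) * ∏ m, M y (σ m) m := by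
    funext y; exact Matrix.det_apply' (M y)
  rw [e]
  apply DifferentiableAt.fun_sum
  intro σ _
  exact ((HasFDerivAt.finset_prod (u := Finset.univ) (g := fun m y => M y (σ m) m)
      (g' := fun m => fderiv ℝ (fun y => M y (σ m) m) x)
      (fun m _ => (h (σ m) m).hasFDerivAt)).differentiableAt).const_mul _

theorem pdv_det {n : ℕ} {M : (Fin n → ℝ) → Matrix (Fin n) (Fin n) ℝ} {x : Fin n → ℝ}
    (h : ∀ k l, DifferentiableAt ℝ (fun y => M y k l) x) (i : Fin n) :
    pdv i (fun y => (M y).det) x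
      = ∑ k, ∑ l, (M x).adjugate l k * pdv i (fun y => M y k l) x := by
  have e : (fun y => (M y).det)
      = fun y => ∑ σ : Perm (Fin n), ((Perm.sign σ : ℤ) : ℝ) * ∏ m, M y (σ m) m := by
    funext y; exact Matrix.det_apply' (M y)
  rw [e]
  have hdiffprod : ∀ (σ : Perm (Fin n)), DifferentiableAt ℝ (fun y => ∏ m, M y (σ m) m) x :=
    fun σ => (HasFDerivAt.finset_prod (u := Finset.univ) (g := fun m y => M y (σ m) m)
      (g' := fun m => fderiv ℝ (fun y => M y (σ m) m) x)
      (fun m _ => (h (σ m) m).hasFDerivAt)).differentiableAt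
  rw [pdv_sum Finset.univ (fun σ _ => ((hdiffprod σ).const_mul _)) i]
  have step : ∀ σ : Perm (Fin n),
      pdv i (fun y => ((Perm.sign σ : ℤ) : ℝ) * ∏ m, M y (σ m) m) x
        = ((Perm.sign σ : ℤ) : ℝ) * ∑ l, (∏ m ∈ Finset.univ.erase l, M x (σ m) m)
            * pdv i (fun y => M y (σ l) l) x := by
    intro σ
    rw [pdv_const_mul _ (hdiffprod σ) i,
      pdv_prod Finset.univ (fun m _ => h (σ m) m) i]
  simp only [step]
  have adjexp : ∀ l k : Fin n, (M x).adjugate l k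
      = ∑ σ ∈ Finset.univ.filter (fun σ : Perm (Fin n) => σ l = k),
          ((Perm.sign σ : ℤ) : ℝ) * ∏ m ∈ Finset.univ.erase l, M x (σ m) m :=
    fun l k => adjugate_eq_sum_perm (M x) l k
  calc ∑ σ : Perm (Fin n), ((Perm.sign σ : ℤ) : ℝ)
        * ∑ l, (∏ m ∈ Finset.univ.erase l, M x (σ m) m) * pdv i (fun y => M y (σ l) l) x
      = ∑ σ : Perm (Fin n), ∑ l, ((Perm.sign σ : ℤ) : ℝ)
        * ((∏ m ∈ Finset.univ.erase l, M x (σ m) m) * pdv i (fun y => M y (σ l) l) x) := by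
        simp [Finset.mul_sum]
    _ = ∑ l, ∑ σ : Perm (Fin n), ((Perm.sign σ : ℤ) : ℝ)
        * ((∏ m ∈ Finset.univ.erase l, M x (σ m) m) * pdv i (fun y => M y (σ l) l) x) :=
        Finset.sum_comm
    _ = ∑ l, ∑ k, ∑ σ ∈ Finset.univ.filter (fun σ : Perm (Fin n) => σ l = k),
          ((Perm.sign σ : ℤ) : ℝ)
        * ((∏ m ∈ Finset.univ.erase l, M x (σ m) m) * pdv i (fun y => M y (σ l) l) x) := by
        refine Finset.sum_congr rfl fun l _ => ?_
        exact (Finset.sum_fiberwise Finset.univ (fun σ : Perm (Fin n) => σ l) _).symm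
    _ = ∑ l, ∑ k, ∑ σ ∈ Finset.univ.filter (fun σ : Perm (Fin n) => σ l = k),
          (((Perm.sign σ : ℤ) : ℝ) * ∏ m ∈ Finset.univ.erase l, M x (σ m) m)
          * pdv i (fun y => M y k l) x := by
        refine Finset.sum_congr rfl fun l _ => Finset.sum_congr rfl fun k _ =>
          Finset.sum_congr rfl fun σ hσ => ?_
        rw [Finset.mem_filter] at hσ
        rw [hσ.2, mul_assoc]
    _ = ∑ l, ∑ k, (M x).adjugate l k * pdv i (fun y => M y k l) x := by
        refine Finset.sum_congr rfl fun l _ => Finset.sum_congr rfl fun k _ => ?_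
        rw [adjexp l k, Finset.sum_mul]
    _ = ∑ k, ∑ l, (M x).adjugate l k * pdv i (fun y => M y k l) x := Finset.sum_comm

end Helpers
open Finset

theorem final_algebra {n : ℕ} (H A : Matrix (Fin n) (Fin n) ℝ)
    (hAH : ∀ i k : Fin n, ∑ j, A i j * H j k = if i = k then 1 else 0)
    (hHsym : ∀ i j, H i j = H j i)
    (T : Fin n → Fin n → Fin n → ℝ) (hT : ∀ i j k, T i j k = T k j i)
    (Φ : Fin n → ℝ) (Φ' : Fin n → Fin n → ℝ) (L : Fin n → ℝ)
    (hL : ∀ i, L i = ∑ k, ∑ l, A l k * T i k l) :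
    ∑ i, ∑ j, H i j * Φ' i j
      = (∑ i, ∑ j, A i j * ∑ k, (T i j k * Φ k + H j k * ∑ l, H i l * Φ' l k))
        - ∑ i, ∑ j, A i j * L i * ∑ k, H j k * Φ k := by
  have hdelta : ∀ (i : Fin n) (c : Fin n → ℝ),
      (∑ k, (if i = k then (1:ℝ) else 0) * c k) = c i := by
    intro i c; simp
  have hsplit : ∑ i, ∑ j, A i j * ∑ k, (T i j k * Φ k + H j k * ∑ l, H i l * Φ' l k)
      = (∑ i, ∑ j, ∑ k, A i j * T i j k * Φ k)
        + ∑ i, ∑ j, A i j * ∑ k, H j k * ∑ l, H i l * Φ' l k := by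
    rw [← Finset.sum_add_distrib]
    refine Finset.sum_congr rfl fun i _ => ?_
    rw [← Finset.sum_add_distrib]
    refine Finset.sum_congr rfl fun j _ => ?_
    rw [Finset.mul_sum, Finset.mul_sum, ← Finset.sum_add_distrib]
    exact Finset.sum_congr rfl fun k _ => by ring
  have claimB : ∑ i, ∑ j, ∑ k, A i j * T i j k * Φ k = ∑ k, L k * Φ k := by
    calc ∑ i, ∑ j, ∑ k, A i j * T i j k * Φ k
        = ∑ i, ∑ k, ∑ j, A i j * T i j k * Φ k :=
          Finset.sum_congr rfl fun i _ => Finset.sum_comm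
      _ = ∑ k, ∑ i, ∑ j, A i j * T i j k * Φ k := Finset.sum_comm
      _ = ∑ k, L k * Φ k := by
          refine Finset.sum_congr rfl fun k _ => ?_
          rw [hL k, Finset.sum_mul]
          calc ∑ i, ∑ j, A i j * T i j k * Φ k
              = ∑ j, ∑ i, A i j * T i j k * Φ k := Finset.sum_comm
            _ = ∑ p, (∑ q, A q p * T k p q) * Φ k := by
                refine Finset.sum_congr rfl fun p _ => ?_
                rw [Finset.sum_mul]
                refine Finset.sum_congr rfl fun q _ => ?_
                rw [hT k p q]
  have claimA : ∑ i, ∑ j, A i j * ∑ k, H j k * ∑ l, H i l * Φ' l k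
      = ∑ i, ∑ j, H i j * Φ' i j := by
    have step1 : ∀ i : Fin n, ∑ j, A i j * ∑ k, H j k * ∑ l, H i l * Φ' l k
        = ∑ k, (∑ j, A i j * H j k) * ∑ l, H i l * Φ' l k := by
      intro i
      calc ∑ j, A i j * ∑ k, H j k * ∑ l, H i l * Φ' l k
          = ∑ j, ∑ k, A i j * (H j k * ∑ l, H i l * Φ' l k) :=
            Finset.sum_congr rfl fun j _ => Finset.mul_sum _ _ _
        _ = ∑ k, ∑ j, A i j * (H j k * ∑ l, H i l * Φ' l k) := Finset.sum_comm
        _ = ∑ k, (∑ j, A i j * H j k) * ∑ l, H i l * Φ' l k := by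
            refine Finset.sum_congr rfl fun k _ => ?_
            rw [Finset.sum_mul]
            exact Finset.sum_congr rfl fun j _ => by ring
    simp only [step1, hAH]
    have h2 : ∀ i : Fin n, ∑ k, (if i = k then (1:ℝ) else 0) * ∑ l, H i l * Φ' l k
        = ∑ l, H i l * Φ' l i := fun i => hdelta i _
    simp only [h2]
    calc ∑ i, ∑ l, H i l * Φ' l i
        = ∑ i, ∑ l, H l i * Φ' l i :=
          Finset.sum_congr rfl fun i _ => Finset.sum_congr rfl fun l _ => by rw [hHsym i l]
      _ = ∑ l, ∑ i, H l i * Φ' l i := Finset.sum_comm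
  have claimC : ∑ i, ∑ j, A i j * L i * ∑ k, H j k * Φ k = ∑ k, L k * Φ k := by
    have step1 : ∀ i : Fin n, ∑ j, A i j * L i * ∑ k, H j k * Φ k
        = L i * ∑ k, (∑ j, A i j * H j k) * Φ k := by
      intro i
      calc ∑ j, A i j * L i * ∑ k, H j k * Φ k
          = ∑ j, ∑ k, A i j * L i * (H j k * Φ k) :=
            Finset.sum_congr rfl fun j _ => Finset.mul_sum _ _ _
        _ = ∑ k, ∑ j, A i j * L i * (H j k * Φ k) := Finset.sum_comm
        _ = L i * ∑ k, (∑ j, A i j * H j k) * Φ k := by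
            rw [Finset.mul_sum]
            refine Finset.sum_congr rfl fun k _ => ?_
            rw [Finset.sum_mul, Finset.mul_sum]
            exact Finset.sum_congr rfl fun j _ => by ring
    simp only [step1, hAH]
    have h2 : ∀ i : Fin n, ∑ k, (if i = k then (1:ℝ) else 0) * Φ k = Φ i :=
      fun i => hdelta i Φ
    simp only [h2]
  rw [hsplit, claimB, claimA, claimC]
  ring
/-- Coordinate change of the operator `Σ u^{ij} ∂²/∂ξ_i∂ξ_j`: for any smooth
`φ` on `Ω*`, at corresponding points `ξ = ∇f(x)`,
`Σ u^{ij} ∂²φ/∂ξ_i∂ξ_j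
  = Σ f^{ij} ∂²(φ∘∇f)/∂x^i∂x^j − Σ f^{ij} ∂(log det(f_{kl}))/∂x^i · ∂(φ∘∇f)/∂x^j`. -/
theorem laplacian_type_operator_coordinate_change {n : ℕ} (Ω Ωs : Set (Fin n → ℝ))
    (hΩ : IsOpen Ω) (hΩconv : Convex ℝ Ω) (hΩs : IsOpen Ωs)
    (f u φ : (Fin n → ℝ) → ℝ)
    (hf : ContDiffOn ℝ (⊤ : ℕ∞) f Ω) (hconv : StrictConvexOn ℝ Ω f)
    (hpd : ∀ x ∈ Ω, (hessM f x).PosDef)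
    (hbij : Set.BijOn (gradv f) Ω Ωs)
    (hu : ContDiffOn ℝ (⊤ : ℕ∞) u Ωs)
    (hleg : ∀ x ∈ Ω, u (gradv f x) = (∑ i, x i * gradv f x i) - f x)
    (hφ : ContDiffOn ℝ (⊤ : ℕ∞) φ Ωs) :
    ∀ x ∈ Ω,
      (∑ i, ∑ j, (hessM u (gradv f x))⁻¹ i j * pdv i (pdv j φ) (gradv f x))
        = (∑ i, ∑ j, (hessM f x)⁻¹ i j * pdv i (pdv j (fun y => φ (gradv f y))) x)
          - ∑ i, ∑ j, (hessM f x)⁻¹ i j *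
              pdv i (fun y => Real.log (hessM f y).det) x *
              pdv j (fun y => φ (gradv f y)) x := by
  intro x hx
  have hf1 : ∀ k, ContDiffOn ℝ (⊤ : ℕ∞) (pdv k f) Ω := fun k => pdv_contDiffOn hΩ hf k
  have hf2 : ∀ k l, ContDiffOn ℝ (⊤ : ℕ∞) (pdv k (pdv l f)) Ω := fun k l => pdv_contDiffOn hΩ (hf1 l) k
  have hu1 : ∀ k, ContDiffOn ℝ (⊤ : ℕ∞) (pdv k u) Ωs := fun k => pdv_contDiffOn hΩs hu k
  have hφ1 : ∀ k, ContDiffOn ℝ (⊤ : ℕ∞) (pdv k φ) Ωs := fun k => pdv_contDiffOn hΩs hφ k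
  have hΩx : Ω ∈ nhds x := hΩ.mem_nhds hx
  have hmem : ∀ {y : Fin n → ℝ}, y ∈ Ω → gradv f y ∈ Ωs := fun hy => hbij.mapsTo hy
  have chain : ∀ (χ : (Fin n → ℝ) → ℝ) {y : Fin n → ℝ}, y ∈ Ω →
      DifferentiableAt ℝ χ (gradv f y) → ∀ i,
      pdv i (fun z => χ (gradv f z)) y
        = ∑ k, pdv i (pdv k f) y * pdv k χ (gradv f y) := by
    intro χ y hy hχd i
    exact pdv_comp (g := gradv f) (fun k => diffAt_of hΩ (hf1 k) hy) hχd i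
  have hgdiff : ∀ {y : Fin n → ℝ}, y ∈ Ω → DifferentiableAt ℝ (gradv f) y :=
    fun hy => differentiableAt_pi.mpr fun k => diffAt_of hΩ (hf1 k) hy
  have hcompdiff : ∀ {χ : (Fin n → ℝ) → ℝ}, ContDiffOn ℝ (⊤ : ℕ∞) χ Ωs → ∀ {y : Fin n → ℝ}, y ∈ Ω →
      DifferentiableAt ℝ (fun z => χ (gradv f z)) y := by
    intro χ hχ' y hy
    exact (diffAt_of hΩs hχ' (hmem hy)).comp y (hgdiff hy)
  have hdet : ∀ {y : Fin n → ℝ}, y ∈ Ω → IsUnit (hessM f y).det :=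
    fun hy => isUnit_iff_ne_zero.mpr (ne_of_gt (hpd _ hy).det_pos)
  -- Step 4 : gradient of the Legendre transform inverts ∇f
  have hstep4 : ∀ y ∈ Ω, ∀ k, pdv k u (gradv f y) = y k := by
    intro y hy
    have hIdent : ∀ i, ∑ k, pdv i (pdv k f) y * pdv k u (gradv f y)
        = ∑ k, pdv i (pdv k f) y * y k := by
      intro i
      have hlhs : pdv i (fun z => u (gradv f z)) y
          = ∑ k, pdv i (pdv k f) y * pdv k u (gradv f y) :=
        chain u hy (diffAt_of hΩs hu (hmem hy)) i
      have heq : (fun z => u (gradv f z))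
          =ᶠ[nhds y] (fun z => (∑ j, z j * gradv f z j) - f z) :=
        Filter.eventuallyEq_of_mem (hΩ.mem_nhds hy) (fun z hz => hleg z hz)
      have hsumdiff : ∀ j : Fin n, DifferentiableAt ℝ (fun z => z j * gradv f z j) y := by
        intro j
        exact ((differentiableAt_pi.mp differentiableAt_fun_id) j).mul (diffAt_of hΩ (hf1 j) hy)
      have hrhs : pdv i (fun z => (∑ j, z j * gradv f z j) - f z) y
          = ∑ j, y j * pdv i (pdv j f) y := by
        rw [pdv_sub (DifferentiableAt.fun_sum (fun j _ => hsumdiff j)) (diffAt_of hΩ hf hy) i]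
        rw [pdv_sum Finset.univ (fun j _ => hsumdiff j) i]
        have hterm : ∀ j : Fin n, pdv i (fun z => z j * gradv f z j) y
            = (if i = j then 1 else 0) * gradv f y j + y j * pdv i (pdv j f) y := by
          intro j
          have e : (fun z : Fin n → ℝ => z j * gradv f z j)
              = (fun z => z j * pdv j f z) := rfl
          rw [e, pdv_mul (differentiableAt_pi.mp differentiableAt_fun_id j)
            (diffAt_of hΩ (hf1 j) hy) i, pdv_proj]
          rfl
        simp only [hterm]
        rw [Finset.sum_add_distrib]
        have h1 : ∑ j, (if i = j then (1:ℝ) else 0) * gradv f y j = gradv f y i := by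
          simp
        rw [h1]
        have h2 : gradv f y i = pdv i f y := rfl
        rw [h2]
        ring
      rw [← hlhs, pdv_congr_nhds heq i, hrhs]
      exact Finset.sum_congr rfl fun k _ => mul_comm _ _
    have hmv : Matrix.mulVec (hessM f y) (fun k => pdv k u (gradv f y))
        = Matrix.mulVec (hessM f y) y := by
      funext i
      simpa [Matrix.mulVec, dotProduct, hessM] using hIdent i
    have hcancel : (fun k => pdv k u (gradv f y)) = y := by
      have h3 := congrArg (fun v => Matrix.mulVec (hessM f y)⁻¹ v) hmv
      simpa [Matrix.mulVec_mulVec, Matrix.nonsing_inv_mul _ (hdet hy), Matrix.one_mulVec]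
        using h3
    exact fun k => congrFun hcancel k
  -- Step 5 : the Hessians are mutually inverse
  have hB : hessM f x * hessM u (gradv f x) = 1 := by
    ext i k
    have heq : (fun y => pdv k u (gradv f y)) =ᶠ[nhds x] (fun y => y k) :=
      Filter.eventuallyEq_of_mem hΩx (fun y hy => hstep4 y hy k)
    have h1 : pdv i (fun y => pdv k u (gradv f y)) x = pdv i (fun y => y k) x :=
      pdv_congr_nhds heq i
    rw [chain (pdv k u) hx (diffAt_of hΩs (hu1 k) (hmem hx)) i, pdv_proj] at h1
    rw [Matrix.mul_apply, Matrix.one_apply]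
    exact h1
  have hBinv : (hessM u (gradv f x))⁻¹ = hessM f x := Matrix.inv_eq_left_inv hB
  have hAH : (hessM f x)⁻¹ * hessM f x = 1 := Matrix.nonsing_inv_mul _ (hdet hx)
  have hAH' : ∀ i k : Fin n,
      ∑ j, (hessM f x)⁻¹ i j * hessM f x j k = if i = k then 1 else 0 := by
    intro i k
    have := congrFun (congrFun hAH i) k
    rwa [Matrix.mul_apply, Matrix.one_apply] at this
  have hHsym : ∀ i j, hessM f x i j = hessM f x j i := fun i j => pdv_comm hΩ hf hx i j
  have hT : ∀ i j k : Fin n,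
      pdv i (pdv j (pdv k f)) x = pdv k (pdv j (pdv i f)) x :=
    fun i j k => pdv3_comm hΩ hf hx i j k
  -- Jacobi's formula for log det of the Hessian
  have hdiffent : ∀ k l, DifferentiableAt ℝ (fun y => hessM f y k l) x :=
    fun k l => diffAt_of hΩ (hf2 k l) hx
  have hlogpdv : ∀ i, pdv i (fun y => Real.log (hessM f y).det) x
      = ∑ k, ∑ l, (hessM f x)⁻¹ l k * pdv i (pdv k (pdv l f)) x := by
    intro i
    have hddiff : DifferentiableAt ℝ (fun y => (hessM f y).det) x := det_diffAt hdiffent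
    have hlog : HasFDerivAt (fun y => Real.log ((hessM f y).det))
        (((hessM f x).det)⁻¹ • fderiv ℝ (fun y => (hessM f y).det) x) x :=
      (hddiff.hasFDerivAt).log (ne_of_gt (hpd x hx).det_pos)
    rw [pdv_hasFDerivAt hlog i]
    simp only [ContinuousLinearMap.smul_apply, smul_eq_mul]
    have e0 : fderiv ℝ (fun y => (hessM f y).det) x (Pi.single i 1)
        = pdv i (fun y => (hessM f y).det) x := rfl
    rw [e0, pdv_det hdiffent i, Finset.mul_sum]
    refine Finset.sum_congr rfl fun k _ => ?_
    rw [Finset.mul_sum]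
    refine Finset.sum_congr rfl fun l _ => ?_
    have hinv_entry : (hessM f x)⁻¹ l k
        = ((hessM f x).det)⁻¹ * (hessM f x).adjugate l k := by
      rw [Matrix.inv_def]
      simp [Ring.inverse_eq_inv', Matrix.smul_apply, smul_eq_mul]
    rw [hinv_entry]
    have e1 : (fun y => hessM f y k l) = pdv k (pdv l f) := rfl
    rw [e1]
    ring
  -- first and second derivatives of φ ∘ ∇f
  have hpsi1 : ∀ j, pdv j (fun z => φ (gradv f z)) x
      = ∑ k, hessM f x j k * pdv k φ (gradv f x) := by
    intro j
    exact chain φ hx (diffAt_of hΩs hφ (hmem hx)) j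
  have hpsi1' : ∀ y ∈ Ω, ∀ j, pdv j (fun z => φ (gradv f z)) y
      = ∑ k, pdv j (pdv k f) y * pdv k φ (gradv f y) :=
    fun y hy j => chain φ hy (diffAt_of hΩs hφ (hmem hy)) j
  have hpsi2 : ∀ i j, pdv i (pdv j (fun z => φ (gradv f z))) x
      = ∑ k, (pdv i (pdv j (pdv k f)) x * pdv k φ (gradv f x)
          + hessM f x j k * ∑ l, hessM f x i l * pdv l (pdv k φ) (gradv f x)) := by
    intro i j
    have heq : pdv j (fun z => φ (gradv f z))
        =ᶠ[nhds x] (fun y => ∑ k, pdv j (pdv k f) y * pdv k φ (gradv f y)) :=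
      Filter.eventuallyEq_of_mem hΩx (fun y hy => hpsi1' y hy j)
    rw [pdv_congr_nhds heq i]
    have hdterm : ∀ k : Fin n,
        DifferentiableAt ℝ (fun y => pdv j (pdv k f) y * pdv k φ (gradv f y)) x :=
      fun k => (diffAt_of hΩ (hf2 j k) hx).mul (hcompdiff (hφ1 k) hx)
    rw [pdv_sum Finset.univ (fun k _ => hdterm k) i]
    refine Finset.sum_congr rfl fun k _ => ?_
    rw [pdv_mul (diffAt_of hΩ (hf2 j k) hx) (hcompdiff (hφ1 k) hx) i,
      chain (pdv k φ) hx (diffAt_of hΩs (hφ1 k) (hmem hx)) i]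
    rfl
  -- put everything together
  have main := final_algebra (hessM f x) ((hessM f x)⁻¹) hAH' hHsym
    (fun i j k => pdv i (pdv j (pdv k f)) x) hT
    (fun k => pdv k φ (gradv f x)) (fun l k => pdv l (pdv k φ) (gradv f x))
    (fun i => pdv i (fun y => Real.log (hessM f y).det) x) hlogpdv
  calc ∑ i, ∑ j, (hessM u (gradv f x))⁻¹ i j * pdv i (pdv j φ) (gradv f x)
      = ∑ i, ∑ j, hessM f x i j * pdv i (pdv j φ) (gradv f x) := by rw [hBinv]
    _ = (∑ i, ∑ j, (hessM f x)⁻¹ i j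
          * ∑ k, (pdv i (pdv j (pdv k f)) x * pdv k φ (gradv f x)
              + hessM f x j k * ∑ l, hessM f x i l * pdv l (pdv k φ) (gradv f x)))
        - ∑ i, ∑ j, (hessM f x)⁻¹ i j * pdv i (fun y => Real.log (hessM f y).det) x
            * ∑ k, hessM f x j k * pdv k φ (gradv f x) := main
    _ = (∑ i, ∑ j, (hessM f x)⁻¹ i j * pdv i (pdv j (fun y => φ (gradv f y))) x)
          - ∑ i, ∑ j, (hessM f x)⁻¹ i j *
              pdv i (fun y => Real.log (hessM f y).det) x *
              pdv j (fun y => φ (gradv f y)) x := by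
        congr 1
        · exact Finset.sum_congr rfl fun i _ => Finset.sum_congr rfl fun j _ => by
            rw [hpsi2 i j]
        · exact Finset.sum_congr rfl fun i _ => Finset.sum_congr rfl fun j _ => by
            rw [hpsi1 j]
end

section
/- Under the affine rescaling ũ(ξ̃) = λ u(A⁻¹ξ̃), the quantity Θ(p)·d²_u(p, q) is invariant: Θ_ũ(Ap)·d²_ũ(Ap, Aq) = Θ_u(p)·d²_u(p, q), where d_u is the distance of the Calabi (Hessian) metric G_u and Θ = J + Φ with Φ = (n+2)^{−2}‖∇ log det(u_{ij})‖²_{G_u} and 4n(n−1)J = Σ u^{il}u^{jm}u^{kn}u_{ijk}u_{lmn}. -/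
open scoped BigOperators

/-- The Calabi length of a path `γ` with respect to the Hessian metric `G_u`. -/
noncomputable def calabiLength {n : ℕ} (u : (Fin n → ℝ) → ℝ) (γ : ℝ → Fin n → ℝ) : ℝ :=
  ∫ t in (0:ℝ)..1,
    Real.sqrt (∑ i, ∑ j, hessM u (γ t) i j * deriv γ t i * deriv γ t j)

/-- The Calabi (Hessian-metric) distance between `p` and `q` inside `Ω`. -/
noncomputable def calabiDist {n : ℕ} (u : (Fin n → ℝ) → ℝ) (Ω : Set (Fin n → ℝ))
    (p q : Fin n → ℝ) : ℝ :=
  sInf {L : ℝ | ∃ γ : ℝ → Fin n → ℝ, ContDiff ℝ 1 γ ∧ γ 0 = p ∧ γ 1 = q ∧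
    (∀ t ∈ Set.Icc (0:ℝ) 1, γ t ∈ Ω) ∧ L = calabiLength u γ}

/-- `Φ = (n+2)^{-2} ‖∇ log det(u_{ij})‖²_{G_u}`. -/
noncomputable def PhiInv {n : ℕ} (u : (Fin n → ℝ) → ℝ) (ξ : Fin n → ℝ) : ℝ :=
  ((n : ℝ) + 2)⁻¹ ^ 2 *
    ∑ i, ∑ j, (hessM u ξ)⁻¹ i j *
      pdv i (fun η => Real.log (hessM u η).det) ξ *
      pdv j (fun η => Real.log (hessM u η).det) ξ

/-- `J` with `4n(n−1)J = Σ u^{il}u^{jm}u^{kn}u_{ijk}u_{lmn}`. -/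
noncomputable def JInv {n : ℕ} (u : (Fin n → ℝ) → ℝ) (ξ : Fin n → ℝ) : ℝ :=
  (4 * (n : ℝ) * ((n : ℝ) - 1))⁻¹ *
    ∑ i, ∑ l, ∑ j, ∑ m, ∑ k, ∑ n', (hessM u ξ)⁻¹ i l * (hessM u ξ)⁻¹ j m *
      (hessM u ξ)⁻¹ k n' * pdv i (pdv j (pdv k u)) ξ * pdv l (pdv m (pdv n' u)) ξ

/-- `Θ = J + Φ`. -/
noncomputable def ThetaInv {n : ℕ} (u : (Fin n → ℝ) → ℝ) (ξ : Fin n → ℝ) : ℝ :=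
  JInv u ξ + PhiInv u ξ

/-! ### Auxiliary lemmas -/

section Aux

open Matrix

variable {n : ℕ}

/- ## Elementary calculus lemmas for `pdv` -/

lemma clm_apply_sum (L : (Fin n → ℝ) →L[ℝ] ℝ) (v : Fin n → ℝ) :
    L v = ∑ k, v k * L (Pi.single k 1) := by
  have hv : v = ∑ k, v k • (Pi.single k 1 : Fin n → ℝ) := by
    ext j
    simp [Pi.single_apply, Finset.sum_ite_eq', eq_comm]
  conv_lhs => rw [hv]
  rw [map_sum]
  exact Finset.sum_congr rfl fun k _ => by rw [_root_.map_smul, smul_eq_mul]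

lemma pdv_congr {f g : (Fin n → ℝ) → ℝ} {x : Fin n → ℝ} (h : f =ᶠ[nhds x] g) (i : Fin n) :
    pdv i f x = pdv i g x := by
  unfold pdv; rw [h.fderiv_eq]

lemma contDiffOn_pdv {Ω : Set (Fin n → ℝ)} (hΩ : IsOpen Ω) {f : (Fin n → ℝ) → ℝ}
    (hf : ContDiffOn ℝ (⊤ : ℕ∞) f Ω) (i : Fin n) : ContDiffOn ℝ (⊤ : ℕ∞) (pdv i f) Ω :=
  ((hf.fderiv_of_isOpen hΩ (by simp)).clm_apply contDiffOn_const)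

lemma diffAt_of_contDiffOn {Ω : Set (Fin n → ℝ)} (hΩ : IsOpen Ω) {f : (Fin n → ℝ) → ℝ}
    (hf : ContDiffOn ℝ (⊤ : ℕ∞) f Ω) {x : Fin n → ℝ} (hx : x ∈ Ω) : DifferentiableAt ℝ f x :=
  ((hf.differentiableOn (by simp)) x hx).differentiableAt (hΩ.mem_nhds hx)

lemma diffAt_comp_mulVec {Ω : Set (Fin n → ℝ)} (hΩ : IsOpen Ω) {f : (Fin n → ℝ) → ℝ}
    (hf : ContDiffOn ℝ (⊤ : ℕ∞) f Ω) (B : Matrix (Fin n) (Fin n) ℝ) {x : Fin n → ℝ}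
    (hx : B.mulVec x ∈ Ω) : DifferentiableAt ℝ (fun ξ => f (B.mulVec ξ)) x :=
  (diffAt_of_contDiffOn hΩ hf hx).comp x
    (LinearMap.toContinuousLinearMap (Matrix.mulVecLin B)).differentiableAt

lemma pdv_comp_mulVec (B : Matrix (Fin n) (Fin n) ℝ) (f : (Fin n → ℝ) → ℝ) (x : Fin n → ℝ)
    (hf : DifferentiableAt ℝ f (B.mulVec x)) (i : Fin n) :
    pdv i (fun ξ => f (B.mulVec ξ)) x = ∑ k, B k i * pdv k f (B.mulVec x) := by
  have hL : (fun ξ => f (B.mulVec ξ))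
      = f ∘ (LinearMap.toContinuousLinearMap (Matrix.mulVecLin B)) := rfl
  unfold pdv
  rw [hL, fderiv_comp x (by exact hf) (ContinuousLinearMap.differentiableAt _),
    ContinuousLinearMap.fderiv]
  have h1 : B.mulVec (Pi.single i 1) = fun k => B k i * 1 := Matrix.mulVec_single B i 1
  simp only [ContinuousLinearMap.coe_comp', Function.comp_apply, ContinuousLinearMap.coe_coe,
    LinearMap.coe_toContinuousLinearMap', Matrix.mulVecLin_apply, h1]
  rw [clm_apply_sum]
  exact Finset.sum_congr rfl fun k _ => by rw [mul_one]

lemma pdv_sum_const_mul (a : Fin n → ℝ) (h : Fin n → (Fin n → ℝ) → ℝ) (x : Fin n → ℝ)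
    (hd : ∀ k, DifferentiableAt ℝ (h k) x) (i : Fin n) :
    pdv i (fun ξ => ∑ k, a k * h k ξ) x = ∑ k, a k * pdv i (h k) x := by
  unfold pdv
  rw [fderiv_fun_sum (fun k _ => (hd k).const_mul (a k))]
  rw [ContinuousLinearMap.sum_apply]
  exact Finset.sum_congr rfl fun k _ => by rw [fderiv_const_mul (hd k)]; rfl

/- ## Transformation of partial derivatives under `ξ ↦ c * g (B ξ)` -/

variable {Ω : Set (Fin n → ℝ)} {g : (Fin n → ℝ) → ℝ}
  (B : Matrix (Fin n) (Fin n) ℝ) (c : ℝ)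

lemma pdv1_transform (hΩ : IsOpen Ω) (hg : ContDiffOn ℝ (⊤ : ℕ∞) g Ω) {x : Fin n → ℝ}
    (hx : B.mulVec x ∈ Ω) (j : Fin n) :
    pdv j (fun ξ => c * g (B.mulVec ξ)) x
      = ∑ k, (c * B k j) * pdv k g (B.mulVec x) := by
  have hdc : DifferentiableAt ℝ (fun ξ => g (B.mulVec ξ)) x := diffAt_comp_mulVec hΩ hg B hx
  unfold pdv
  rw [fderiv_const_mul hdc]
  have := pdv_comp_mulVec B g x (diffAt_of_contDiffOn hΩ hg hx) j
  unfold pdv at this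
  rw [ContinuousLinearMap.smul_apply, smul_eq_mul, this, Finset.mul_sum]
  exact Finset.sum_congr rfl fun k _ => by ring

lemma pdv2_transform (hΩ : IsOpen Ω) (hg : ContDiffOn ℝ (⊤ : ℕ∞) g Ω) {x : Fin n → ℝ}
    (hx : B.mulVec x ∈ Ω) (i j : Fin n) :
    pdv i (pdv j (fun ξ => c * g (B.mulVec ξ))) x
      = ∑ k, ∑ l, (c * B k j * B l i) * pdv l (pdv k g) (B.mulVec x) := by
  have hU : IsOpen (B.mulVec ⁻¹' Ω) :=
    hΩ.preimage (LinearMap.toContinuousLinearMap (Matrix.mulVecLin B)).continuous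
  have heq : pdv j (fun ξ => c * g (B.mulVec ξ))
      =ᶠ[nhds x] fun ξ => ∑ k, (c * B k j) * pdv k g (B.mulVec ξ) :=
    Filter.eventuallyEq_of_mem (hU.mem_nhds hx) fun y hy => pdv1_transform B c hΩ hg hy j
  rw [pdv_congr heq i,
    pdv_sum_const_mul _ _ x (fun k => diffAt_comp_mulVec hΩ (contDiffOn_pdv hΩ hg k) B hx) i]
  refine Finset.sum_congr rfl fun k _ => ?_
  rw [pdv_comp_mulVec B (pdv k g) x (diffAt_of_contDiffOn hΩ (contDiffOn_pdv hΩ hg k) hx) i,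
    Finset.mul_sum]
  exact Finset.sum_congr rfl fun l _ => by ring

lemma pdv3_transform (hΩ : IsOpen Ω) (hg : ContDiffOn ℝ (⊤ : ℕ∞) g Ω) {x : Fin n → ℝ}
    (hx : B.mulVec x ∈ Ω) (i j k : Fin n) :
    pdv i (pdv j (pdv k (fun ξ => c * g (B.mulVec ξ)))) x
      = ∑ d, ∑ b, ∑ a, (c * B d k * B b j * B a i) * pdv a (pdv b (pdv d g)) (B.mulVec x) := by
  have hU : IsOpen (B.mulVec ⁻¹' Ω) :=
    hΩ.preimage (LinearMap.toContinuousLinearMap (Matrix.mulVecLin B)).continuous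
  have heq : pdv j (pdv k (fun ξ => c * g (B.mulVec ξ)))
      =ᶠ[nhds x] fun ξ => ∑ d, (c * B d k) * ∑ b, B b j * pdv b (pdv d g) (B.mulVec ξ) := by
    refine Filter.eventuallyEq_of_mem (hU.mem_nhds hx) fun y hy => ?_
    rw [pdv2_transform B c hΩ hg hy j k]
    refine Finset.sum_congr rfl fun d _ => ?_
    rw [Finset.mul_sum]
    exact Finset.sum_congr rfl fun b _ => by ring
  rw [pdv_congr heq i,
    pdv_sum_const_mul _ _ x (fun d => DifferentiableAt.fun_sum (fun b _ =>
      (diffAt_comp_mulVec hΩ (contDiffOn_pdv hΩ (contDiffOn_pdv hΩ hg d) b) B hx).const_mul _)) i]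
  refine Finset.sum_congr rfl fun d _ => ?_
  rw [pdv_sum_const_mul _ _ x (fun b =>
      diffAt_comp_mulVec hΩ (contDiffOn_pdv hΩ (contDiffOn_pdv hΩ hg d) b) B hx) i,
    Finset.mul_sum]
  refine Finset.sum_congr rfl fun b _ => ?_
  rw [pdv_comp_mulVec B _ x (diffAt_of_contDiffOn hΩ
      (contDiffOn_pdv hΩ (contDiffOn_pdv hΩ hg d) b) hx) i, Finset.mul_sum, Finset.mul_sum]
  exact Finset.sum_congr rfl fun a _ => by ring

lemma hess_transform (hΩ : IsOpen Ω) (hg : ContDiffOn ℝ (⊤ : ℕ∞) g Ω) {x : Fin n → ℝ}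
    (hx : B.mulVec x ∈ Ω) :
    hessM (fun ξ => c * g (B.mulVec ξ)) x = c • (Bᵀ * hessM g (B.mulVec x) * B) := by
  ext i j
  show pdv i (pdv j (fun ξ => c * g (B.mulVec ξ))) x
    = (c • (Bᵀ * hessM g (B.mulVec x) * B)) i j
  rw [pdv2_transform B c hΩ hg hx i j]
  rw [Matrix.smul_apply, Matrix.mul_apply, smul_eq_mul, Finset.mul_sum]
  refine Finset.sum_congr rfl fun k _ => ?_
  rw [Matrix.mul_apply, Finset.sum_mul, Finset.mul_sum]
  refine Finset.sum_congr rfl fun l _ => ?_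
  show c * B k j * B l i * pdv l (pdv k g) (B.mulVec x)
    = c * (Bᵀ i l * hessM g (B.mulVec x) l k * B k j)
  rw [Matrix.transpose_apply]
  show c * B k j * B l i * pdv l (pdv k g) (B.mulVec x)
    = c * (B l i * pdv l (pdv k g) (B.mulVec x) * B k j)
  ring

/- ## Summation gymnastics -/

lemma swap12 (G : Fin n → Fin n → ℝ) : ∑ a, ∑ b, G a b = ∑ b, ∑ a, G a b :=
  Finset.sum_comm

lemma rot3 (G : Fin n → Fin n → Fin n → ℝ) :
    ∑ a, ∑ b, ∑ c, G a b c = ∑ c, ∑ a, ∑ b, G a b c := by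
  rw [show (∑ a, ∑ b, ∑ c, G a b c) = ∑ a, ∑ c, ∑ b, G a b c from
    Finset.sum_congr rfl fun a _ => Finset.sum_comm]
  exact Finset.sum_comm

lemma sum_rot2 (F : Fin n → Fin n → Fin n → Fin n → Fin n → Fin n → ℝ) :
    ∑ a, ∑ b, ∑ c, ∑ d, ∑ e, ∑ f, F a b c d e f
      = ∑ c, ∑ d, ∑ e, ∑ f, ∑ a, ∑ b, F a b c d e f := by
  calc ∑ a, ∑ b, ∑ c, ∑ d, ∑ e, ∑ f, F a b c d e f
      = ∑ c, ∑ a, ∑ b, ∑ d, ∑ e, ∑ f, F a b c d e f :=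
        rot3 fun a b c => ∑ d, ∑ e, ∑ f, F a b c d e f
    _ = ∑ c, ∑ d, ∑ a, ∑ b, ∑ e, ∑ f, F a b c d e f :=
        Finset.sum_congr rfl fun c _ => rot3 fun a b d => ∑ e, ∑ f, F a b c d e f
    _ = ∑ c, ∑ d, ∑ e, ∑ a, ∑ b, ∑ f, F a b c d e f :=
        Finset.sum_congr rfl fun c _ => Finset.sum_congr rfl fun d _ =>
          rot3 fun a b e => ∑ f, F a b c d e f
    _ = ∑ c, ∑ d, ∑ e, ∑ f, ∑ a, ∑ b, F a b c d e f :=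
        Finset.sum_congr rfl fun c _ => Finset.sum_congr rfl fun d _ =>
          Finset.sum_congr rfl fun e _ => rot3 fun a b f => F a b c d e f

lemma contract_step (B X : Matrix (Fin n) (Fin n) ℝ) (f g : Fin n → ℝ) (c : ℝ) :
    ∑ i, ∑ l, c * X i l * ((∑ a, B a i * f a) * (∑ d, B d l * g d))
      = ∑ a, ∑ d, c * ((B * X * Bᵀ) a d * (f a * g d)) := by
  have key : ∀ a d, (B * X * Bᵀ) a d * (f a * g d)
      = ∑ i, ∑ l, X i l * (B a i * f a * (B d l * g d)) := by
    intro a d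
    simp only [Matrix.mul_apply, Matrix.transpose_apply, Finset.sum_mul]
    rw [Finset.sum_comm]
    exact Finset.sum_congr rfl fun i _ => Finset.sum_congr rfl fun l _ => by ring
  have hL : ∀ i l, c * X i l * ((∑ a, B a i * f a) * (∑ d, B d l * g d))
      = ∑ a, ∑ d, c * (X i l * (B a i * f a * (B d l * g d))) := by
    intro i l
    rw [Finset.sum_mul_sum, Finset.mul_sum]
    refine Finset.sum_congr rfl fun a _ => ?_
    rw [Finset.mul_sum]
    exact Finset.sum_congr rfl fun d _ => by ring
  simp only [hL]
  calc ∑ i, ∑ l, ∑ a, ∑ d, c * (X i l * (B a i * f a * (B d l * g d)))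
      = ∑ a, ∑ i, ∑ l, ∑ d, c * (X i l * (B a i * f a * (B d l * g d))) :=
        rot3 fun i l a => ∑ d, c * (X i l * (B a i * f a * (B d l * g d)))
    _ = ∑ a, ∑ d, ∑ i, ∑ l, c * (X i l * (B a i * f a * (B d l * g d))) :=
        Finset.sum_congr rfl fun a _ =>
          rot3 fun i l d => c * (X i l * (B a i * f a * (B d l * g d)))
    _ = ∑ a, ∑ d, c * ((B * X * Bᵀ) a d * (f a * g d)) := by
        refine Finset.sum_congr rfl fun a _ => Finset.sum_congr rfl fun d _ => ?_
        rw [key, Finset.mul_sum]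
        exact Finset.sum_congr rfl fun i _ => by rw [Finset.mul_sum]

lemma factorT (lam : ℝ) (T : Fin n → Fin n → Fin n → ℝ)
    (i j k : Fin n) :
    ∑ d, ∑ b, ∑ a, (lam * B d k * B b j * B a i) * T a b d
      = ∑ a, B a i * (∑ b, B b j * ∑ d, B d k * (lam * T a b d)) := by
  rw [rot3 fun d b a => (lam * B d k * B b j * B a i) * T a b d]
  refine Finset.sum_congr rfl fun a _ => ?_
  rw [swap12 fun d b => (lam * B d k * B b j * B a i) * T a b d, Finset.mul_sum]
  refine Finset.sum_congr rfl fun b _ => ?_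
  rw [Finset.mul_sum, Finset.mul_sum]
  exact Finset.sum_congr rfl fun d _ => by ring

lemma J_contract (X Hi : Matrix (Fin n) (Fin n) ℝ) (hBX : B * X * Bᵀ = Hi)
    (lam : ℝ) (hlam : lam ≠ 0) (T : Fin n → Fin n → Fin n → ℝ) :
    ∑ i, ∑ l, ∑ j, ∑ m, ∑ k, ∑ o,
      (lam⁻¹ * X i l) * (lam⁻¹ * X j m) * (lam⁻¹ * X k o) *
        (∑ d, ∑ b, ∑ a, (lam * B d k * B b j * B a i) * T a b d) *
        (∑ d, ∑ b, ∑ a, (lam * B d o * B b m * B a l) * T a b d)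
      = lam⁻¹ * ∑ i, ∑ l, ∑ j, ∑ m, ∑ k, ∑ o,
          Hi i l * Hi j m * Hi k o * T i j k * T l m o := by
  set P1 : Fin n → Fin n → Fin n → ℝ :=
    fun a j k => ∑ b, B b j * ∑ d, B d k * (lam * T a b d) with hP1
  set P2 : Fin n → Fin n → Fin n → ℝ :=
    fun a b k => ∑ d, B d k * (lam * T a b d) with hP2
  have hfac : ∀ i j k, ∑ d, ∑ b, ∑ a, (lam * B d k * B b j * B a i) * T a b d
      = ∑ a, B a i * P1 a j k := fun i j k => factorT B lam T i j k
  calc ∑ i, ∑ l, ∑ j, ∑ m, ∑ k, ∑ o,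
        (lam⁻¹ * X i l) * (lam⁻¹ * X j m) * (lam⁻¹ * X k o) *
          (∑ d, ∑ b, ∑ a, (lam * B d k * B b j * B a i) * T a b d) *
          (∑ d, ∑ b, ∑ a, (lam * B d o * B b m * B a l) * T a b d)
      = ∑ j, ∑ m, ∑ k, ∑ o, ∑ i, ∑ l,
          (lam⁻¹ * ((lam⁻¹ * X j m) * (lam⁻¹ * X k o))) * X i l *
            ((∑ a, B a i * P1 a j k) * (∑ a, B a l * P1 a m o)) := by
        rw [sum_rot2 fun i l j m k o =>
          (lam⁻¹ * X i l) * (lam⁻¹ * X j m) * (lam⁻¹ * X k o) *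
            (∑ d, ∑ b, ∑ a, (lam * B d k * B b j * B a i) * T a b d) *
            (∑ d, ∑ b, ∑ a, (lam * B d o * B b m * B a l) * T a b d)]
        refine Finset.sum_congr rfl fun j _ => Finset.sum_congr rfl fun m _ =>
          Finset.sum_congr rfl fun k _ => Finset.sum_congr rfl fun o _ =>
          Finset.sum_congr rfl fun i _ => Finset.sum_congr rfl fun l _ => ?_
        rw [hfac i j k, hfac l m o]
        ring
    _ = ∑ j, ∑ m, ∑ k, ∑ o, ∑ a, ∑ a',
          (lam⁻¹ * ((lam⁻¹ * X j m) * (lam⁻¹ * X k o))) * (Hi a a' * (P1 a j k * P1 a' m o)) := by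
        refine Finset.sum_congr rfl fun j _ => Finset.sum_congr rfl fun m _ =>
          Finset.sum_congr rfl fun k _ => Finset.sum_congr rfl fun o _ => ?_
        rw [contract_step B X (fun a => P1 a j k) (fun a => P1 a m o)
          (lam⁻¹ * ((lam⁻¹ * X j m) * (lam⁻¹ * X k o))), hBX]
    _ = ∑ k, ∑ o, ∑ a, ∑ a', ∑ j, ∑ m,
          (lam⁻¹ * (lam⁻¹ * ((lam⁻¹ * X k o) * Hi a a'))) * X j m *
            ((∑ b, B b j * P2 a b k) * (∑ b, B b m * P2 a' b o)) := by
        rw [sum_rot2 fun j m k o a a' =>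
          (lam⁻¹ * ((lam⁻¹ * X j m) * (lam⁻¹ * X k o))) * (Hi a a' * (P1 a j k * P1 a' m o))]
        refine Finset.sum_congr rfl fun k _ => Finset.sum_congr rfl fun o _ =>
          Finset.sum_congr rfl fun a _ => Finset.sum_congr rfl fun a' _ =>
          Finset.sum_congr rfl fun j _ => Finset.sum_congr rfl fun m _ => ?_
        rw [hP1]
        ring
    _ = ∑ k, ∑ o, ∑ a, ∑ a', ∑ b, ∑ b',
          (lam⁻¹ * (lam⁻¹ * ((lam⁻¹ * X k o) * Hi a a'))) *
            (Hi b b' * (P2 a b k * P2 a' b' o)) := by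
        refine Finset.sum_congr rfl fun k _ => Finset.sum_congr rfl fun o _ =>
          Finset.sum_congr rfl fun a _ => Finset.sum_congr rfl fun a' _ => ?_
        rw [contract_step B X (fun b => P2 a b k) (fun b => P2 a' b o)
          (lam⁻¹ * (lam⁻¹ * ((lam⁻¹ * X k o) * Hi a a'))), hBX]
    _ = ∑ a, ∑ a', ∑ b, ∑ b', ∑ k, ∑ o,
          (lam⁻¹ * (lam⁻¹ * (lam⁻¹ * (Hi a a' * Hi b b')))) * X k o *
            ((∑ d, B d k * (lam * T a b d)) * (∑ d, B d o * (lam * T a' b' d))) := by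
        rw [sum_rot2 fun k o a a' b b' =>
          (lam⁻¹ * (lam⁻¹ * ((lam⁻¹ * X k o) * Hi a a'))) *
            (Hi b b' * (P2 a b k * P2 a' b' o))]
        refine Finset.sum_congr rfl fun a _ => Finset.sum_congr rfl fun a' _ =>
          Finset.sum_congr rfl fun b _ => Finset.sum_congr rfl fun b' _ =>
          Finset.sum_congr rfl fun k _ => Finset.sum_congr rfl fun o _ => ?_
        rw [hP2]
        ring
    _ = ∑ a, ∑ a', ∑ b, ∑ b', ∑ d, ∑ d',
          (lam⁻¹ * (lam⁻¹ * (lam⁻¹ * (Hi a a' * Hi b b')))) *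
            (Hi d d' * ((lam * T a b d) * (lam * T a' b' d'))) := by
        refine Finset.sum_congr rfl fun a _ => Finset.sum_congr rfl fun a' _ =>
          Finset.sum_congr rfl fun b _ => Finset.sum_congr rfl fun b' _ => ?_
        rw [contract_step B X (fun d => lam * T a b d) (fun d => lam * T a' b' d)
          (lam⁻¹ * (lam⁻¹ * (lam⁻¹ * (Hi a a' * Hi b b')))), hBX]
    _ = lam⁻¹ * ∑ i, ∑ l, ∑ j, ∑ m, ∑ k, ∑ o,
          Hi i l * Hi j m * Hi k o * T i j k * T l m o := by
        rw [Finset.mul_sum]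
        refine Finset.sum_congr rfl fun a _ => ?_
        rw [Finset.mul_sum]
        refine Finset.sum_congr rfl fun a' _ => ?_
        rw [Finset.mul_sum]
        refine Finset.sum_congr rfl fun b _ => ?_
        rw [Finset.mul_sum]
        refine Finset.sum_congr rfl fun b' _ => ?_
        rw [Finset.mul_sum]
        refine Finset.sum_congr rfl fun d _ => ?_
        rw [Finset.mul_sum]
        refine Finset.sum_congr rfl fun d' _ => ?_
        field_simp

lemma Phi_contract (X Hi : Matrix (Fin n) (Fin n) ℝ) (hBX : B * X * Bᵀ = Hi)
    (lam : ℝ) (gr : Fin n → ℝ) :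
    ∑ i, ∑ j, (lam⁻¹ * X i j) * (∑ a, B a i * gr a) * (∑ a, B a j * gr a)
      = lam⁻¹ * ∑ i, ∑ j, Hi i j * gr i * gr j := by
  calc ∑ i, ∑ j, (lam⁻¹ * X i j) * (∑ a, B a i * gr a) * (∑ a, B a j * gr a)
      = ∑ i, ∑ j, lam⁻¹ * X i j * ((∑ a, B a i * gr a) * (∑ a, B a j * gr a)) :=
        Finset.sum_congr rfl fun i _ => Finset.sum_congr rfl fun j _ => by ring
    _ = ∑ a, ∑ d, lam⁻¹ * ((B * X * Bᵀ) a d * (gr a * gr d)) :=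
        contract_step B X gr gr lam⁻¹
    _ = lam⁻¹ * ∑ i, ∑ j, Hi i j * gr i * gr j := by
        rw [Finset.mul_sum]
        refine Finset.sum_congr rfl fun i _ => ?_
        rw [Finset.mul_sum]
        refine Finset.sum_congr rfl fun j _ => ?_
        rw [hBX]
        ring

lemma quad_transform (H M : Matrix (Fin n) (Fin n) ℝ) (hBM : B * M = 1)
    (lam : ℝ) (w : Fin n → ℝ) :
    ∑ i, ∑ j, (lam • (Bᵀ * H * B)) i j * (M.mulVec w) i * (M.mulVec w) j
      = lam * ∑ i, ∑ j, H i j * w i * w j := by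
  have hMw : ∀ i, M.mulVec w i = ∑ a, Mᵀ a i * w a := by
    intro i
    simp [Matrix.mulVec, dotProduct, Matrix.transpose_apply]
  calc ∑ i, ∑ j, (lam • (Bᵀ * H * B)) i j * (M.mulVec w) i * (M.mulVec w) j
      = ∑ i, ∑ j, lam * (Bᵀ * H * B) i j * ((∑ a, Mᵀ a i * w a) * (∑ a, Mᵀ a j * w a)) := by
        refine Finset.sum_congr rfl fun i _ => Finset.sum_congr rfl fun j _ => ?_
        rw [hMw i, hMw j, Matrix.smul_apply, smul_eq_mul]
        ring
    _ = ∑ a, ∑ d, lam * ((Mᵀ * (Bᵀ * H * B) * Mᵀᵀ) a d * (w a * w d)) :=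
        contract_step Mᵀ (Bᵀ * H * B) w w lam
    _ = lam * ∑ i, ∑ j, H i j * w i * w j := by
        have hMBH : Mᵀ * (Bᵀ * H * B) * Mᵀᵀ = H := by
          rw [Matrix.transpose_transpose]
          calc Mᵀ * (Bᵀ * H * B) * M = (Mᵀ * Bᵀ) * H * (B * M) := by
                noncomm_ring [Matrix.mul_assoc]
          _ = H := by rw [← Matrix.transpose_mul, hBM, Matrix.transpose_one, Matrix.one_mul,
                Matrix.mul_one]
        rw [hMBH, Finset.mul_sum]
        refine Finset.sum_congr rfl fun i _ => ?_
        rw [Finset.mul_sum]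
        exact Finset.sum_congr rfl fun j _ => by ring

end Aux
section Main

open Matrix
open scoped Pointwise

variable {n : ℕ}

lemma length_transform {Ω : Set (Fin n → ℝ)} (hΩ : IsOpen Ω) {u : (Fin n → ℝ) → ℝ}
    (hu : ContDiffOn ℝ (⊤ : ℕ∞) u Ω) (B M : Matrix (Fin n) (Fin n) ℝ) (hBM : B * M = 1)
    (lam : ℝ) (hlam : 0 < lam) (γ : ℝ → Fin n → ℝ) (hγ : ContDiff ℝ 1 γ)
    (hmem : ∀ t ∈ Set.Icc (0:ℝ) 1, γ t ∈ Ω) :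
    calabiLength (fun ξ => lam * u (B.mulVec ξ)) (fun t => M.mulVec (γ t))
      = Real.sqrt lam * calabiLength u γ := by
  unfold calabiLength
  rw [← intervalIntegral.integral_const_mul]
  refine intervalIntegral.integral_congr fun t ht => ?_
  rw [Set.uIcc_of_le (by norm_num : (0:ℝ) ≤ 1)] at ht
  have hγt := hmem t ht
  have hBMv : B.mulVec (M.mulVec (γ t)) = γ t := by
    rw [Matrix.mulVec_mulVec, hBM, Matrix.one_mulVec]
  have hder : deriv (fun s => M.mulVec (γ s)) t = M.mulVec (deriv γ t) := by
    have h1 : HasDerivAt γ (deriv γ t) t :=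
      ((hγ.differentiable one_ne_zero) t).hasDerivAt
    have h2 := ((LinearMap.toContinuousLinearMap
      (Matrix.mulVecLin M)).hasFDerivAt).comp_hasDerivAt t h1
    have h3 := h2.deriv
    simp only [LinearMap.coe_toContinuousLinearMap', Matrix.mulVecLin_apply,
      ContinuousLinearMap.coe_coe] at h3
    exact h3
  have hhess : hessM (fun ξ => lam * u (B.mulVec ξ)) (M.mulVec (γ t))
      = lam • (Bᵀ * hessM u (γ t) * B) := by
    rw [hess_transform B lam hΩ hu (by rw [hBMv]; exact hγt), hBMv]
  rw [hder, hhess, quad_transform B (hessM u (γ t)) M hBM lam (deriv γ t),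
    Real.sqrt_mul hlam.le]

/-- `Θ(p)·d²_u(p,q)` is invariant under the affine rescaling
`ũ(ξ̃) = λ·u(A⁻¹ξ̃)`. -/
theorem theta_dist_sq_affine_invariant {n : ℕ} (Ω : Set (Fin n → ℝ))
    (hΩ : IsOpen Ω) (hΩconv : Convex ℝ Ω)
    (u : (Fin n → ℝ) → ℝ)
    (hu : ContDiffOn ℝ (⊤ : ℕ∞) u Ω) (hconv : StrictConvexOn ℝ Ω u)
    (hpd : ∀ ξ ∈ Ω, (hessM u ξ).PosDef)
    (M : Matrix (Fin n) (Fin n) ℝ) (hM : IsUnit M.det) (lam : ℝ) (hlam : 0 < lam)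
    (p q : Fin n → ℝ) (hp : p ∈ Ω) (hq : q ∈ Ω) :
    ThetaInv (fun ξ => lam * u (M⁻¹.mulVec ξ)) (M.mulVec p) *
        (calabiDist (fun ξ => lam * u (M⁻¹.mulVec ξ)) (M.mulVec '' Ω)
          (M.mulVec p) (M.mulVec q)) ^ 2
      = ThetaInv u p * (calabiDist u Ω p q) ^ 2 := by
  set B := M⁻¹ with hBdef
  have hBM : B * M = 1 := M.nonsing_inv_mul hM
  have hMB : M * B = 1 := M.mul_nonsing_inv hM
  have hBMv : ∀ v : Fin n → ℝ, B.mulVec (M.mulVec v) = v := fun v => by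
    rw [Matrix.mulVec_mulVec, hBM, Matrix.one_mulVec]
  have hMBv : ∀ v : Fin n → ℝ, M.mulVec (B.mulVec v) = v := fun v => by
    rw [Matrix.mulVec_mulVec, hMB, Matrix.one_mulVec]
  have hmemp : B.mulVec (M.mulVec p) ∈ Ω := by rw [hBMv]; exact hp
  have hHdet : IsUnit (hessM u p).det :=
    isUnit_iff_ne_zero.mpr (hpd p hp).det_pos.ne'
  have hBdet : IsUnit B.det := M.isUnit_nonsing_inv_det hM
  -- Hessian of the rescaled function at M p
  have hHess : hessM (fun ξ => lam * u (B.mulVec ξ)) (M.mulVec p)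
      = lam • (Bᵀ * hessM u p * B) := by
    rw [hess_transform B lam hΩ hu hmemp, hBMv]
  -- Its inverse
  have hInv : (hessM (fun ξ => lam * u (B.mulVec ξ)) (M.mulVec p))⁻¹
      = lam⁻¹ • (M * (hessM u p)⁻¹ * Mᵀ) := by
    rw [hHess]
    apply Matrix.inv_eq_right_inv
    rw [Matrix.smul_mul, Matrix.mul_smul, smul_smul, mul_inv_cancel₀ hlam.ne']
    simp only [Matrix.mul_assoc]
    rw [show B * (M * ((hessM u p)⁻¹ * Mᵀ)) = (hessM u p)⁻¹ * Mᵀ from by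
      rw [← Matrix.mul_assoc, hBM, Matrix.one_mul]]
    rw [show hessM u p * ((hessM u p)⁻¹ * Mᵀ) = Mᵀ from by
      rw [← Matrix.mul_assoc, Matrix.mul_nonsing_inv _ hHdet, Matrix.one_mul]]
    rw [← Matrix.transpose_mul, hMB, Matrix.transpose_one, one_smul]
  have hX : B * (M * (hessM u p)⁻¹ * Mᵀ) * Bᵀ = (hessM u p)⁻¹ := by
    rw [show B * (M * (hessM u p)⁻¹ * Mᵀ) = (hessM u p)⁻¹ * Mᵀ from by
      rw [← Matrix.mul_assoc, ← Matrix.mul_assoc, hBM, Matrix.one_mul]]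
    rw [Matrix.mul_assoc, ← Matrix.transpose_mul, hBM, Matrix.transpose_one, Matrix.mul_one]
  -- Third derivatives
  have hT : ∀ i j k : Fin n, pdv i (pdv j (pdv k (fun ξ => lam * u (B.mulVec ξ)))) (M.mulVec p)
      = ∑ d, ∑ b, ∑ a, (lam * B d k * B b j * B a i) * pdv a (pdv b (pdv d u)) p := by
    intro i j k
    rw [pdv3_transform B lam hΩ hu hmemp i j k, hBMv]
  -- J transforms with factor lam⁻¹
  have hJ : JInv (fun ξ => lam * u (B.mulVec ξ)) (M.mulVec p) = lam⁻¹ * JInv u p := by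
    unfold JInv
    rw [hInv]
    simp only [Matrix.smul_apply, smul_eq_mul, hT]
    rw [J_contract B (M * (hessM u p)⁻¹ * Mᵀ) (hessM u p)⁻¹ hX lam hlam.ne'
      (fun a b d => pdv a (pdv b (pdv d u)) p)]
    ring
  -- log det gradient
  have hdet_diff : DifferentiableAt ℝ (fun y => (hessM u y).det) p := by
    have hfun : (fun y => (hessM u y).det)
        = fun y => ∑ σ : Equiv.Perm (Fin n),
            ((Equiv.Perm.sign σ : ℤ) : ℝ) * ∏ i, pdv (σ i) (pdv i u) y := by
      funext y
      rw [Matrix.det_apply']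
      rfl
    rw [hfun]
    refine DifferentiableAt.fun_sum fun σ _ => DifferentiableAt.const_mul ?_ _
    exact (HasFDerivAt.finset_prod (fun i _ => (diffAt_of_contDiffOn hΩ
      (contDiffOn_pdv hΩ (contDiffOn_pdv hΩ hu i) (σ i)) hp).hasFDerivAt)).differentiableAt
  have hlog_diff : DifferentiableAt ℝ (fun y => Real.log (hessM u y).det) p :=
    hdet_diff.log (hpd p hp).det_pos.ne'
  have hU : IsOpen (B.mulVec ⁻¹' Ω) :=
    hΩ.preimage (LinearMap.toContinuousLinearMap (Matrix.mulVecLin B)).continuous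
  have hC0 : lam ^ n * B.det ^ 2 ≠ 0 :=
    mul_ne_zero (pow_ne_zero _ hlam.ne') (pow_ne_zero _ hBdet.ne_zero)
  have hev : (fun η => Real.log (hessM (fun ξ => lam * u (B.mulVec ξ)) η).det)
      =ᶠ[nhds (M.mulVec p)] fun η =>
        Real.log (lam ^ n * B.det ^ 2) + Real.log (hessM u (B.mulVec η)).det := by
    refine Filter.eventuallyEq_of_mem (hU.mem_nhds hmemp) fun y hy => ?_
    have hval : (hessM (fun ξ => lam * u (B.mulVec ξ)) y).det
        = (lam ^ n * B.det ^ 2) * (hessM u (B.mulVec y)).det := by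
      rw [hess_transform B lam hΩ hu hy, Matrix.det_smul, Fintype.card_fin,
        Matrix.det_mul, Matrix.det_mul, Matrix.det_transpose]
      ring
    show Real.log (hessM (fun ξ => lam * u (B.mulVec ξ)) y).det
      = Real.log (lam ^ n * B.det ^ 2) + Real.log (hessM u (B.mulVec y)).det
    rw [hval, Real.log_mul hC0 (hpd _ hy).det_pos.ne']
  have hgr : ∀ i : Fin n,
      pdv i (fun η => Real.log (hessM (fun ξ => lam * u (B.mulVec ξ)) η).det) (M.mulVec p)
        = ∑ a, B a i * pdv a (fun y => Real.log (hessM u y).det) p := by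
    intro i
    rw [pdv_congr hev i]
    have h1 : pdv i (fun η =>
        Real.log (lam ^ n * B.det ^ 2) + Real.log (hessM u (B.mulVec η)).det) (M.mulVec p)
        = pdv i (fun η => Real.log (hessM u (B.mulVec η)).det) (M.mulVec p) := by
      unfold pdv
      rw [fderiv_const_add]
    rw [h1, pdv_comp_mulVec B (fun y => Real.log (hessM u y).det) (M.mulVec p)
      (by rw [hBMv]; exact hlog_diff) i, hBMv]
  -- Φ transforms with factor lam⁻¹
  have hPhi : PhiInv (fun ξ => lam * u (B.mulVec ξ)) (M.mulVec p) = lam⁻¹ * PhiInv u p := by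
    unfold PhiInv
    rw [hInv]
    simp only [Matrix.smul_apply, smul_eq_mul, hgr]
    rw [Phi_contract B (M * (hessM u p)⁻¹ * Mᵀ) (hessM u p)⁻¹ hX lam
      (fun a => pdv a (fun y => Real.log (hessM u y).det) p)]
    ring
  have hTheta : ThetaInv (fun ξ => lam * u (B.mulVec ξ)) (M.mulVec p)
      = lam⁻¹ * ThetaInv u p := by
    unfold ThetaInv
    rw [hJ, hPhi]
    ring
  -- distance transforms with factor √lam
  have hSet : {L : ℝ | ∃ γ : ℝ → Fin n → ℝ, ContDiff ℝ 1 γ ∧ γ 0 = M.mulVec p ∧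
        γ 1 = M.mulVec q ∧ (∀ t ∈ Set.Icc (0:ℝ) 1, γ t ∈ M.mulVec '' Ω) ∧
        L = calabiLength (fun ξ => lam * u (B.mulVec ξ)) γ}
      = Real.sqrt lam • {L : ℝ | ∃ γ : ℝ → Fin n → ℝ, ContDiff ℝ 1 γ ∧ γ 0 = p ∧ γ 1 = q ∧
        (∀ t ∈ Set.Icc (0:ℝ) 1, γ t ∈ Ω) ∧ L = calabiLength u γ} := by
    ext L
    constructor
    · rintro ⟨γ', hγ', h0, h1, hmem, rfl⟩
      refine Set.mem_smul_set.mpr ⟨calabiLength u (fun t => B.mulVec (γ' t)),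
        ⟨fun t => B.mulVec (γ' t),
          (LinearMap.toContinuousLinearMap (Matrix.mulVecLin B)).contDiff.comp hγ',
          by show B.mulVec (γ' 0) = p; rw [h0, hBMv],
          by show B.mulVec (γ' 1) = q; rw [h1, hBMv], ?_, rfl⟩, ?_⟩
      · intro t ht
        obtain ⟨w, hw, hwe⟩ := hmem t ht
        show B.mulVec (γ' t) ∈ Ω
        rw [← hwe, hBMv]
        exact hw
      · have hmem' : ∀ t ∈ Set.Icc (0:ℝ) 1, B.mulVec (γ' t) ∈ Ω := by
          intro t ht
          obtain ⟨w, hw, hwe⟩ := hmem t ht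
          rw [← hwe, hBMv]
          exact hw
        have hfix : (fun t => M.mulVec ((fun s => B.mulVec (γ' s)) t)) = γ' := by
          funext t
          exact hMBv (γ' t)
        have := length_transform hΩ hu B M hBM lam hlam (fun t => B.mulVec (γ' t))
          ((LinearMap.toContinuousLinearMap (Matrix.mulVecLin B)).contDiff.comp hγ') hmem'
        rw [hfix] at this
        rw [smul_eq_mul, ← this]
    · rintro ⟨L', ⟨γ, hγ, h0, h1, hmem, rfl⟩, rfl⟩
      refine ⟨fun t => M.mulVec (γ t),
        (LinearMap.toContinuousLinearMap (Matrix.mulVecLin M)).contDiff.comp hγ,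
        by show M.mulVec (γ 0) = M.mulVec p; rw [h0],
        by show M.mulVec (γ 1) = M.mulVec q; rw [h1],
        fun t ht => ⟨γ t, hmem t ht, rfl⟩, ?_⟩
      show Real.sqrt lam • calabiLength u γ
        = calabiLength (fun ξ => lam * u (B.mulVec ξ)) fun t => M.mulVec (γ t)
      rw [smul_eq_mul, length_transform hΩ hu B M hBM lam hlam γ hγ hmem]
  have hdist : calabiDist (fun ξ => lam * u (B.mulVec ξ)) (M.mulVec '' Ω)
      (M.mulVec p) (M.mulVec q) = Real.sqrt lam * calabiDist u Ω p q := by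
    unfold calabiDist
    rw [hSet, Real.sInf_smul_of_nonneg (Real.sqrt_nonneg lam), smul_eq_mul]
  rw [hTheta, hdist, mul_pow, Real.sq_sqrt hlam.le]
  field_simp

end Main
end

section
/- For a smooth strictly convex f on Ω ⊂ ℝⁿ with Legendre transform u, the Pick-type invariant satisfies Σ f^{il}f^{jm}f^{kn} f_{ijk} f_{lmn} = Σ u^{il}u^{jm}u^{kn} u_{ijk} u_{lmn} at corresponding points ξ = ∇f(x), where subscripts denote partial derivatives in x for f and in ξ for u. -/
open scoped BigOperators

namespace PickAux

open scoped ContDiff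

variable {n : ℕ} {Ω Ωs : Set (Fin n → ℝ)} {f g u : (Fin n → ℝ) → ℝ} {x : Fin n → ℝ}

lemma contDiffOn_pdv (hΩ : IsOpen Ω) (hf : ContDiffOn ℝ ∞ f Ω) (i : Fin n) :
    ContDiffOn ℝ ∞ (pdv i f) Ω :=
  (hf.fderiv_of_isOpen hΩ (by simp)).clm_apply contDiffOn_const

lemma diffAt (hΩ : IsOpen Ω) (hg : ContDiffOn ℝ ∞ g Ω) (hx : x ∈ Ω) :
    DifferentiableAt ℝ g x :=
  (hg.differentiableOn (by simp)).differentiableAt (hΩ.mem_nhds hx)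

lemma clm_apply_eq_sum (L : (Fin n → ℝ) →L[ℝ] ℝ) (v : Fin n → ℝ) :
    L v = ∑ k, v k * L (Pi.single k 1) := by
  have hv : v = ∑ k, v k • (Pi.single k (1:ℝ) : Fin n → ℝ) := by
    funext i; simp [Finset.sum_apply, Pi.single_apply]
  conv_lhs => rw [hv]
  rw [map_sum]
  simp [smul_eq_mul]

lemma diffAt_gradv (hΩ : IsOpen Ω) (hf : ContDiffOn ℝ ∞ f Ω) (hx : x ∈ Ω) :
    DifferentiableAt ℝ (gradv f) x :=
  differentiableAt_pi.2 fun i => diffAt hΩ (contDiffOn_pdv hΩ hf i) hx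

lemma fderiv_gradv_apply (hΩ : IsOpen Ω) (hf : ContDiffOn ℝ ∞ f Ω) (hx : x ∈ Ω)
    (j k : Fin n) :
    fderiv ℝ (gradv f) x (Pi.single j 1) k = pdv j (pdv k f) x := by
  have h : ∀ i, DifferentiableAt ℝ (pdv i f) x :=
    fun i => diffAt hΩ (contDiffOn_pdv hΩ hf i) hx
  have h2 : fderiv ℝ (gradv f) x = ContinuousLinearMap.pi fun i => fderiv ℝ (pdv i f) x :=
    fderiv_pi h
  rw [h2]; rfl

lemma fderiv_comp_gradv (hΩ : IsOpen Ω) (hf : ContDiffOn ℝ ∞ f Ω) (hx : x ∈ Ω)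
    (hg : DifferentiableAt ℝ g (gradv f x)) (j : Fin n) :
    fderiv ℝ (fun y => g (gradv f y)) x (Pi.single j 1)
      = ∑ k, pdv j (pdv k f) x * pdv k g (gradv f x) := by
  have hF := diffAt_gradv hΩ hf hx
  have hcomp : fderiv ℝ (fun y => g (gradv f y)) x
      = (fderiv ℝ g (gradv f x)).comp (fderiv ℝ (gradv f) x) :=
    fderiv_comp x hg hF
  rw [hcomp, ContinuousLinearMap.comp_apply,
    clm_apply_eq_sum (fderiv ℝ g (gradv f x)) _]
  refine Finset.sum_congr rfl fun k _ => ?_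
  rw [fderiv_gradv_apply hΩ hf hx j k]
  rfl

lemma fderiv_Q (hΩ : IsOpen Ω) (hf : ContDiffOn ℝ ∞ f Ω) (hx : x ∈ Ω) (j : Fin n) :
    fderiv ℝ (fun y => (∑ i, y i * pdv i f y) - f y) x (Pi.single j 1)
      = ∑ i, x i * pdv j (pdv i f) x := by
  have hproj : ∀ i : Fin n, DifferentiableAt ℝ (fun y : Fin n → ℝ => y i) x := fun i =>
    (ContinuousLinearMap.proj i : (Fin n → ℝ) →L[ℝ] ℝ).differentiableAt
  have hpdv : ∀ i : Fin n, DifferentiableAt ℝ (pdv i f) x := fun i =>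
    diffAt hΩ (contDiffOn_pdv hΩ hf i) hx
  have hterm : ∀ i : Fin n, DifferentiableAt ℝ (fun y : Fin n → ℝ => y i * pdv i f y) x :=
    fun i => (hproj i).mul (hpdv i)
  have hsum : DifferentiableAt ℝ (fun y : Fin n → ℝ => ∑ i, y i * pdv i f y) x :=
    DifferentiableAt.fun_sum fun i _ => hterm i
  rw [fderiv_fun_sub hsum (diffAt hΩ hf hx), ContinuousLinearMap.sub_apply,
    fderiv_fun_sum fun i _ => hterm i, ContinuousLinearMap.sum_apply]
  have hmulterm : ∀ i : Fin n,
      (fderiv ℝ (fun y : Fin n → ℝ => y i * pdv i f y) x) (Pi.single j 1)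
        = x i * pdv j (pdv i f) x + pdv i f x * (if i = j then 1 else 0) := by
    intro i
    rw [fderiv_fun_mul (hproj i) (hpdv i)]
    have h1 : fderiv ℝ (fun y : Fin n → ℝ => y i) x
        = (ContinuousLinearMap.proj i : (Fin n → ℝ) →L[ℝ] ℝ) :=
      (ContinuousLinearMap.proj i : (Fin n → ℝ) →L[ℝ] ℝ).fderiv
    simp only [ContinuousLinearMap.add_apply, ContinuousLinearMap.smul_apply, h1,
      ContinuousLinearMap.proj_apply, smul_eq_mul]
    rw [Pi.single_apply]
    rfl
  calc (∑ i, (fderiv ℝ (fun y : Fin n → ℝ => y i * pdv i f y) x) (Pi.single j 1))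
        - fderiv ℝ f x (Pi.single j 1)
      = (∑ i, (x i * pdv j (pdv i f) x + pdv i f x * (if i = j then 1 else 0)))
          - pdv j f x := by
        rw [Finset.sum_congr rfl fun i _ => hmulterm i]; rfl
    _ = ∑ i, x i * pdv j (pdv i f) x := by
        rw [Finset.sum_add_distrib]
        simp [mul_ite]

lemma mulVec_cancel {A : Matrix (Fin n) (Fin n) ℝ} (hA : IsUnit A.det)
    {v w : Fin n → ℝ} (h : A.mulVec v = A.mulVec w) : v = w := by
  have h2 := congrArg (fun z => A⁻¹.mulVec z) h
  simpa [Matrix.mulVec_mulVec, Matrix.nonsing_inv_mul A hA] using h2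

/-- Step A : the gradient of `u` inverts the gradient of `f`. -/
lemma stepA (hΩ : IsOpen Ω) (hΩs : IsOpen Ωs)
    (hf : ContDiffOn ℝ ∞ f Ω) (hu : ContDiffOn ℝ ∞ u Ωs)
    (hpd : ∀ x ∈ Ω, (hessM f x).PosDef)
    (hmaps : Set.MapsTo (gradv f) Ω Ωs)
    (hleg : ∀ x ∈ Ω, u (gradv f x) = (∑ i, x i * gradv f x i) - f x) :
    ∀ y ∈ Ω, ∀ k, pdv k u (gradv f y) = y k := by
  intro y hy
  have hev : (fun z => u (gradv f z)) =ᶠ[nhds y]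
      (fun z => (∑ i, z i * pdv i f z) - f z) :=
    Filter.eventuallyEq_of_mem (hΩ.mem_nhds hy) fun z hz => hleg z hz
  have hde := hev.fderiv_eq (𝕜 := ℝ)
  have key : ∀ j, ∑ k, pdv j (pdv k f) y * pdv k u (gradv f y)
      = ∑ k, pdv j (pdv k f) y * y k := by
    intro j
    have hL := fderiv_comp_gradv hΩ hf hy (diffAt hΩs hu (hmaps hy)) j
    have hR := fderiv_Q hΩ hf hy j
    rw [← hL, hde, hR]
    exact Finset.sum_congr rfl fun k _ => by ring
  have hvec : (hessM f y).mulVec (fun k => pdv k u (gradv f y)) = (hessM f y).mulVec y := by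
    funext j
    simpa [Matrix.mulVec, dotProduct, hessM] using key j
  have hdet : IsUnit (hessM f y).det := isUnit_iff_ne_zero.2 (hpd y hy).det_pos.ne'
  intro k
  exact congrFun (mulVec_cancel hdet hvec) k

/-- Step B : the Hessians are mutually inverse. -/
lemma stepB (hΩ : IsOpen Ω) (hΩs : IsOpen Ωs)
    (hf : ContDiffOn ℝ ∞ f Ω) (hu : ContDiffOn ℝ ∞ u Ωs)
    (hmaps : Set.MapsTo (gradv f) Ω Ωs)
    (hA : ∀ y ∈ Ω, ∀ k, pdv k u (gradv f y) = y k) :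
    ∀ y ∈ Ω, ∀ a b, ∑ k, pdv a (pdv k f) y * pdv k (pdv b u) (gradv f y)
      = if a = b then 1 else 0 := by
  intro y hy a b
  have hev : (fun z => pdv b u (gradv f z)) =ᶠ[nhds y] (fun z => z b) :=
    Filter.eventuallyEq_of_mem (hΩ.mem_nhds hy) fun z hz => hA z hz b
  have hde := hev.fderiv_eq (𝕜 := ℝ)
  have hL := fderiv_comp_gradv hΩ hf hy
    (diffAt hΩs (contDiffOn_pdv hΩs hu b) (hmaps hy)) a
  have hR : fderiv ℝ (fun z : Fin n → ℝ => z b) y (Pi.single a 1)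
      = if a = b then 1 else 0 := by
    have h1 : fderiv ℝ (fun z : Fin n → ℝ => z b) y
        = (ContinuousLinearMap.proj b : (Fin n → ℝ) →L[ℝ] ℝ) :=
      (ContinuousLinearMap.proj b : (Fin n → ℝ) →L[ℝ] ℝ).fderiv
    rw [h1]
    simp only [ContinuousLinearMap.proj_apply, Pi.single_apply]
    by_cases h : a = b <;> simp [h, eq_comm]
  rw [← hL, hde, hR]

/-- Step C : differentiating the Hessian identity. -/
lemma stepC (hΩ : IsOpen Ω) (hΩs : IsOpen Ωs)
    (hf : ContDiffOn ℝ ∞ f Ω) (hu : ContDiffOn ℝ ∞ u Ωs)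
    (hmaps : Set.MapsTo (gradv f) Ω Ωs)
    (hB : ∀ y ∈ Ω, ∀ a b, ∑ k, pdv a (pdv k f) y * pdv k (pdv b u) (gradv f y)
      = if a = b then 1 else 0)
    (hx : x ∈ Ω) (r j l : Fin n) :
    ∑ k, (pdv j (pdv k f) x *
        (∑ a, pdv l (pdv a f) x * pdv a (pdv k (pdv r u)) (gradv f x))
      + pdv k (pdv r u) (gradv f x) * pdv l (pdv j (pdv k f)) x) = 0 := by
  have hd1 : ∀ k : Fin n, DifferentiableAt ℝ (pdv j (pdv k f)) x := fun k =>
    diffAt hΩ (contDiffOn_pdv hΩ (contDiffOn_pdv hΩ hf k) j) hx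
  have hgk : ∀ k : Fin n, DifferentiableAt ℝ (pdv k (pdv r u)) (gradv f x) := fun k =>
    diffAt hΩs (contDiffOn_pdv hΩs (contDiffOn_pdv hΩs hu r) k) (hmaps hx)
  have hd2 : ∀ k : Fin n,
      DifferentiableAt ℝ (fun y => pdv k (pdv r u) (gradv f y)) x := by
    intro k
    have hF : DifferentiableAt ℝ (gradv f) x :=
      differentiableAt_pi.2 fun i => diffAt hΩ (contDiffOn_pdv hΩ hf i) hx
    exact (hgk k).comp x hF
  have hterm : ∀ k : Fin n, DifferentiableAt ℝ
      (fun y => pdv j (pdv k f) y * pdv k (pdv r u) (gradv f y)) x :=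
    fun k => (hd1 k).mul (hd2 k)
  have hev : (fun y => ∑ k, pdv j (pdv k f) y * pdv k (pdv r u) (gradv f y)) =ᶠ[nhds x]
      (fun _ => if j = r then (1:ℝ) else 0) :=
    Filter.eventuallyEq_of_mem (hΩ.mem_nhds hx) fun z hz => hB z hz j r
  have hzero : fderiv ℝ
      (fun y => ∑ k, pdv j (pdv k f) y * pdv k (pdv r u) (gradv f y)) x = 0 := by
    rw [hev.fderiv_eq (𝕜 := ℝ)]
    exact fderiv_const_apply _
  have happ := congrFun (congrArg DFunLike.coe hzero) (Pi.single l (1:ℝ))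
  rw [fderiv_fun_sum fun k _ => hterm k] at happ
  simp only [ContinuousLinearMap.sum_apply, ContinuousLinearMap.zero_apply] at happ
  rw [← happ]
  refine Finset.sum_congr rfl fun k _ => ?_
  rw [fderiv_fun_mul (hd1 k) (hd2 k)]
  simp only [ContinuousLinearMap.add_apply, ContinuousLinearMap.smul_apply, smul_eq_mul]
  rw [fderiv_comp_gradv hΩ hf hx (hgk k) l]
  rfl

/-! ### Pure algebra -/

variable {N : ℕ}

lemma pull (g c : Fin N → ℝ) (ψ : Fin N → Fin N → ℝ) :
    ∑ n, g n * ∑ a, c a * ψ a n = ∑ a, c a * ∑ n, g n * ψ a n := by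
  simp only [Finset.mul_sum]
  rw [Finset.sum_comm]
  exact Finset.sum_congr rfl fun a _ => Finset.sum_congr rfl fun n _ => by ring

lemma contract1 {A B : Fin N → Fin N → ℝ}
    (hAB : ∀ i j, ∑ k, A i k * B k j = if i = j then 1 else 0)
    (ψ : Fin N → ℝ) (i : Fin N) :
    ∑ l, A i l * ∑ a, B l a * ψ a = ψ i := by
  calc ∑ l, A i l * ∑ a, B l a * ψ a = ∑ a, (∑ l, A i l * B l a) * ψ a := by
        simp only [Finset.mul_sum]
        rw [Finset.sum_comm]
        exact Finset.sum_congr rfl fun a _ => by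
          rw [Finset.sum_mul]
          exact Finset.sum_congr rfl fun l _ => by ring
    _ = ψ i := by simp [hAB]

lemma reorder (M : Fin N → Fin N → ℝ) (P Q : Fin N → Fin N → Fin N → ℝ) :
    ∑ i, ∑ l, ∑ j, ∑ m, ∑ k, ∑ n', M i l * M j m * M k n' * P i j k * Q l m n'
      = ∑ i, ∑ j, ∑ k, P i j k *
          (∑ l, M i l * ∑ m, M j m * ∑ n', M k n' * Q l m n') := by
  refine Finset.sum_congr rfl fun i _ => ?_
  rw [Finset.sum_comm]
  refine Finset.sum_congr rfl fun j _ => ?_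
  calc ∑ l, ∑ m, ∑ k, ∑ n', M i l * M j m * M k n' * P i j k * Q l m n'
      = ∑ l, ∑ k, ∑ m, ∑ n', M i l * M j m * M k n' * P i j k * Q l m n' :=
        Finset.sum_congr rfl fun l _ => Finset.sum_comm
    _ = ∑ k, ∑ l, ∑ m, ∑ n', M i l * M j m * M k n' * P i j k * Q l m n' :=
        Finset.sum_comm
    _ = ∑ k, P i j k * (∑ l, M i l * ∑ m, M j m * ∑ n', M k n' * Q l m n') := by
        refine Finset.sum_congr rfl fun k _ => ?_
        simp only [Finset.mul_sum]
        refine Finset.sum_congr rfl fun l _ => Finset.sum_congr rfl fun m _ =>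
          Finset.sum_congr rfl fun n' _ => by ring

lemma key_alg (A B : Fin N → Fin N → ℝ) (T U : Fin N → Fin N → Fin N → ℝ)
    (hAB : ∀ i j, ∑ k, A i k * B k j = if i = j then 1 else 0)
    (hBs : ∀ i j, B i j = B j i)
    (hU : ∀ p q r, U p q r = -∑ l, B p l * ∑ j, B q j * ∑ k, B k r * T l j k) :
    (∑ i, ∑ l, ∑ j, ∑ m, ∑ k, ∑ n', B i l * B j m * B k n' * T i j k * T l m n')
      = ∑ i, ∑ l, ∑ j, ∑ m, ∑ k, ∑ n', A i l * A j m * A k n' * U i j k * U l m n' := by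
  have hU2 : ∀ p q r, U p q r = -∑ l, B p l * ∑ j, B q j * ∑ k, B r k * T l j k := by
    intro p q r
    rw [hU p q r]
    congr 1
    refine Finset.sum_congr rfl fun l _ => ?_
    congr 1
    refine Finset.sum_congr rfl fun j _ => ?_
    congr 1
    exact Finset.sum_congr rfl fun k _ => by rw [hBs k r]
  have claim1 : ∀ i j k, ∑ l, A i l * ∑ m, A j m * ∑ n', A k n' * U l m n' = -T i j k := by
    intro i j k
    have key : ∑ l, A i l * ∑ m, A j m * ∑ n', A k n' *
        (∑ a, B l a * ∑ b, B m b * ∑ c, B n' c * T a b c) = T i j k := by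
      have step_n : ∀ l m, (∑ n', A k n' *
          (∑ a, B l a * ∑ b, B m b * ∑ c, B n' c * T a b c))
          = ∑ a, B l a * ∑ b, B m b * T a b k := by
        intro l m
        rw [pull (fun n' => A k n') (fun a => B l a)
          (fun a n' => ∑ b, B m b * ∑ c, B n' c * T a b c)]
        refine Finset.sum_congr rfl fun a _ => ?_
        congr 1
        rw [pull (fun n' => A k n') (fun b => B m b)
          (fun b n' => ∑ c, B n' c * T a b c)]
        refine Finset.sum_congr rfl fun b _ => ?_
        congr 1
        exact contract1 hAB (fun c => T a b c) k
      calc ∑ l, A i l * ∑ m, A j m * ∑ n', A k n' *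
            (∑ a, B l a * ∑ b, B m b * ∑ c, B n' c * T a b c)
          = ∑ l, A i l * ∑ m, A j m * (∑ a, B l a * ∑ b, B m b * T a b k) :=
            Finset.sum_congr rfl fun l _ => by
              congr 1
              exact Finset.sum_congr rfl fun m _ => by rw [step_n l m]
        _ = ∑ l, A i l * ∑ a, B l a * T a j k := by
            refine Finset.sum_congr rfl fun l _ => ?_
            congr 1
            rw [pull (fun m => A j m) (fun a => B l a) (fun a m => ∑ b, B m b * T a b k)]
            refine Finset.sum_congr rfl fun a _ => ?_
            congr 1
            exact contract1 hAB (fun b => T a b k) j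
        _ = T i j k := contract1 hAB (fun a => T a j k) i
    calc ∑ l, A i l * ∑ m, A j m * ∑ n', A k n' * U l m n'
        = ∑ l, A i l * ∑ m, A j m * ∑ n', A k n' *
            (-(∑ a, B l a * ∑ b, B m b * ∑ c, B n' c * T a b c)) := by
          refine Finset.sum_congr rfl fun l _ => ?_
          congr 1
          refine Finset.sum_congr rfl fun m _ => ?_
          congr 1
          refine Finset.sum_congr rfl fun n' _ => ?_
          rw [hU2 l m n']
      _ = -(∑ l, A i l * ∑ m, A j m * ∑ n', A k n' *
            (∑ a, B l a * ∑ b, B m b * ∑ c, B n' c * T a b c)) := by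
          simp only [mul_neg, Finset.sum_neg_distrib]
      _ = -T i j k := by rw [key]
  have claim2 : ∀ i j k, ∑ l, B i l * ∑ m, B j m * ∑ n', B k n' * T l m n' = -U i j k := by
    intro i j k
    rw [hU2 i j k, neg_neg]
  rw [reorder B T T, reorder A U U]
  refine Finset.sum_congr rfl fun i _ => Finset.sum_congr rfl fun j _ =>
    Finset.sum_congr rfl fun k _ => ?_
  rw [claim1 i j k, claim2 i j k]
  ring

end PickAux

/-- The Pick-type invariant is the same in both coordinate systems: at
corresponding points `ξ = ∇f(x)`,
`Σ f^{il}f^{jm}f^{kn} f_{ijk} f_{lmn} = Σ u^{il}u^{jm}u^{kn} u_{ijk} u_{lmn}`. -/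
theorem pick_invariant_legendre {n : ℕ} (Ω Ωs : Set (Fin n → ℝ))
    (hΩ : IsOpen Ω) (hΩconv : Convex ℝ Ω) (hΩs : IsOpen Ωs)
    (f u : (Fin n → ℝ) → ℝ)
    (hf : ContDiffOn ℝ (⊤ : ℕ∞) f Ω) (hconv : StrictConvexOn ℝ Ω f)
    (hpd : ∀ x ∈ Ω, (hessM f x).PosDef)
    (hbij : Set.BijOn (gradv f) Ω Ωs)
    (hu : ContDiffOn ℝ (⊤ : ℕ∞) u Ωs)
    (hleg : ∀ x ∈ Ω, u (gradv f x) = (∑ i, x i * gradv f x i) - f x) :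
    ∀ x ∈ Ω,
      (∑ i, ∑ l, ∑ j, ∑ m, ∑ k, ∑ n',
          (hessM f x)⁻¹ i l * (hessM f x)⁻¹ j m * (hessM f x)⁻¹ k n' *
            pdv i (pdv j (pdv k f)) x * pdv l (pdv m (pdv n' f)) x)
        = ∑ i, ∑ l, ∑ j, ∑ m, ∑ k, ∑ n',
            (hessM u (gradv f x))⁻¹ i l * (hessM u (gradv f x))⁻¹ j m *
              (hessM u (gradv f x))⁻¹ k n' *
              pdv i (pdv j (pdv k u)) (gradv f x) *
              pdv l (pdv m (pdv n' u)) (gradv f x) := by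
  classical
  have hf' : ContDiffOn ℝ (((⊤:ℕ∞) : WithTop ℕ∞)) f Ω := hf.of_le (by simp)
  have hu' : ContDiffOn ℝ (((⊤:ℕ∞) : WithTop ℕ∞)) u Ωs := hu.of_le (by simp)
  have hmaps : Set.MapsTo (gradv f) Ω Ωs := hbij.mapsTo
  have hA := PickAux.stepA hΩ hΩs hf' hu' hpd hmaps hleg
  have hB := PickAux.stepB hΩ hΩs hf' hu' hmaps hA
  intro x hx
  set ξ := gradv f x with hξ
  -- matrix identities
  have hABmat : hessM f x * hessM u ξ = 1 := by
    ext j i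
    simpa [hessM, Matrix.mul_apply, Matrix.one_apply] using hB x hx j i
  have hBAmat : hessM u ξ * hessM f x = 1 := mul_eq_one_comm.1 hABmat
  have hAinv : (hessM f x)⁻¹ = hessM u ξ := Matrix.inv_eq_right_inv hABmat
  have hBinv : (hessM u ξ)⁻¹ = hessM f x := Matrix.inv_eq_right_inv hBAmat
  have hAherm : (hessM f x).IsHermitian := (hpd x hx).1
  have hBherm : (hessM u ξ).IsHermitian := by
    rw [← hAinv]; exact hAherm.inv
  have hBs : ∀ a b, pdv a (pdv b u) ξ = pdv b (pdv a u) ξ := by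
    intro a b
    have := hBherm.apply b a
    simpa [hessM] using this
  -- entrywise inverse identities
  have hAB' : ∀ a b, ∑ k, pdv a (pdv k f) x * pdv k (pdv b u) ξ
      = if a = b then 1 else 0 := hB x hx
  have hBA' : ∀ a b, ∑ k, pdv a (pdv k u) ξ * pdv k (pdv b f) x
      = if a = b then 1 else 0 := by
    intro a b
    have h2 := congrFun (congrFun hBAmat a) b
    simpa [hessM, Matrix.mul_apply, Matrix.one_apply] using h2
  -- the formula for third derivatives of u
  have hU : ∀ p q r, pdv p (pdv q (pdv r u)) ξ
      = -∑ l, pdv p (pdv l u) ξ * ∑ j, pdv q (pdv j u) ξ *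
          ∑ k, pdv k (pdv r u) ξ * pdv l (pdv j (pdv k f)) x := by
    intro p q r
    have E1 : ∀ j l, ∑ k, pdv j (pdv k f) x *
        (∑ a, pdv l (pdv a f) x * pdv a (pdv k (pdv r u)) ξ)
        = -∑ k, pdv k (pdv r u) ξ * pdv l (pdv j (pdv k f)) x := by
      intro j l
      have h0 := PickAux.stepC hΩ hΩs hf' hu' hmaps hB hx r j l
      rw [Finset.sum_add_distrib] at h0
      linarith [h0]
    have E2 : ∀ l, ∑ a, pdv l (pdv a f) x * pdv a (pdv q (pdv r u)) ξ
        = -∑ j, pdv q (pdv j u) ξ * ∑ k, pdv k (pdv r u) ξ * pdv l (pdv j (pdv k f)) x := by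
      intro l
      have hc := PickAux.contract1 hBA'
        (fun k => ∑ a, pdv l (pdv a f) x * pdv a (pdv k (pdv r u)) ξ) q
      rw [← hc]
      calc ∑ j, pdv q (pdv j u) ξ *
            ∑ k, pdv j (pdv k f) x *
              (∑ a, pdv l (pdv a f) x * pdv a (pdv k (pdv r u)) ξ)
          = ∑ j, pdv q (pdv j u) ξ *
            (-∑ k, pdv k (pdv r u) ξ * pdv l (pdv j (pdv k f)) x) := by
            refine Finset.sum_congr rfl fun j _ => ?_
            rw [E1 j l]
        _ = -∑ j, pdv q (pdv j u) ξ *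
            ∑ k, pdv k (pdv r u) ξ * pdv l (pdv j (pdv k f)) x := by
            simp only [mul_neg, Finset.sum_neg_distrib]
    have hc2 := PickAux.contract1 hBA'
      (fun a => pdv a (pdv q (pdv r u)) ξ) p
    rw [← hc2]
    calc ∑ l, pdv p (pdv l u) ξ *
          ∑ a, pdv l (pdv a f) x * pdv a (pdv q (pdv r u)) ξ
        = ∑ l, pdv p (pdv l u) ξ *
          (-∑ j, pdv q (pdv j u) ξ *
            ∑ k, pdv k (pdv r u) ξ * pdv l (pdv j (pdv k f)) x) := by
          refine Finset.sum_congr rfl fun l _ => ?_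
          rw [E2 l]
      _ = -∑ l, pdv p (pdv l u) ξ * ∑ j, pdv q (pdv j u) ξ *
            ∑ k, pdv k (pdv r u) ξ * pdv l (pdv j (pdv k f)) x := by
          simp only [mul_neg, Finset.sum_neg_distrib]
  rw [hAinv, hBinv]
  exact PickAux.key_alg (fun a b => pdv a (pdv b f) x) (fun a b => pdv a (pdv b u) ξ)
    (fun a b c => pdv a (pdv b (pdv c f)) x) (fun a b c => pdv a (pdv b (pdv c u)) ξ)
    hAB' hBs hU
end
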